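/- arXiv:1702.02894 — 5 statements merged into one kernel-verified Lean document; each statement's English description precedes it below -/
import Mathlib

section
/- For s > 1, the asymptotic minimal Riesz s-energy constant in dimension 1 equals twice the Riemann zeta function: C_{s,1} = 2ζ(s). -/
open scoped Classical

open MeasureTheory Filter Topology ENNReal Set

noncomputable section

def cube (d : ℕ) (R : ℝ) : Set (EuclideanSpace ℝ (Fin d)) :=
  {x | ∀ i, |x i| ≤ R / 2}

/-- Riesz interaction (with exponent `s`) between two point sets. -/
def interE (d : ℕ) (s : ℝ) (A B : Set (EuclideanSpace ℝ (Fin d))) : ℝ≥0∞ :=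
  ∑' (p : A) (q : B),
    if (p : EuclideanSpace ℝ (Fin d)) = (q : EuclideanSpace ℝ (Fin d)) then 0
    else edist (p : EuclideanSpace ℝ (Fin d)) (q : EuclideanSpace ℝ (Fin d)) ^ (-s)

/-- Riesz `s`-energy of an infinite point configuration. -/
def Ws (d : ℕ) (s : ℝ) (C : Set (EuclideanSpace ℝ (Fin d))) : ℝ≥0∞ :=
  Filter.atTop.liminf fun R : ℝ =>
    ENNReal.ofReal (R ^ (-(d : ℝ))) * interE d s (C ∩ cube d R) (C ∩ cube d R)

/-- Density of a point configuration. -/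
def Dens (d : ℕ) (C : Set (EuclideanSpace ℝ (Fin d))) : ℝ≥0∞ :=
  Filter.atTop.liminf fun R : ℝ =>
    ((C ∩ cube d R).encard : ℝ≥0∞) / ENNReal.ofReal (R ^ (d : ℝ))

/-- Riesz `s`-energy of a finite configuration. -/
def Esfin (d : ℕ) (s : ℝ) {N : ℕ} (ω : Fin N → EuclideanSpace ℝ (Fin d)) : ℝ≥0∞ :=
  ∑ i, ∑ j, if i = j then 0 else edist (ω i) (ω j) ^ (-s)

/-- Minimal `N`-point Riesz `s`-energy on a set `A`. -/
def minEs (d : ℕ) (s : ℝ) (A : Set (EuclideanSpace ℝ (Fin d))) (N : ℕ) : ℝ≥0∞ :=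
  ⨅ (ω : Fin N → EuclideanSpace ℝ (Fin d)) (_ : ∀ i, ω i ∈ A), Esfin d s ω

instance (d : ℕ) : MeasurableSpace (Set (EuclideanSpace ℝ (Fin d))) := ⊤

def stationary (d : ℕ) (P : Measure (Set (EuclideanSpace ℝ (Fin d)))) : Prop :=
  ∀ v : EuclideanSpace ℝ (Fin d), Measure.map (fun C => (fun x => x + v) '' C) P = P

def WsProc (d : ℕ) (s : ℝ) (P : Measure (Set (EuclideanSpace ℝ (Fin d)))) : ℝ≥0∞ :=
  Filter.atTop.liminf fun R : ℝ =>
    ENNReal.ofReal (R ^ (-(d : ℝ))) * ∫⁻ C, interE d s (C ∩ cube d R) (C ∩ cube d R) ∂P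

def intensity (d : ℕ) (P : Measure (Set (EuclideanSpace ℝ (Fin d)))) : ℝ≥0∞ :=
  ∫⁻ C, ((C ∩ cube d 1).encard : ℝ≥0∞) ∂P

/-- Kullback–Leibler divergence (for probability measures). -/
def KL {Ω : Type*} [MeasurableSpace Ω] (μ ν : Measure Ω) : ℝ≥0∞ :=
  if μ ≪ ν then
    ∫⁻ x, ENNReal.ofReal ((μ.rnDeriv ν x).toReal * Real.log (μ.rnDeriv ν x).toReal
      - (μ.rnDeriv ν x).toReal + 1) ∂ν
  else ∞

/-- Specific relative entropy (per unit volume) of `P` with respect to `Q`. -/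
def ERSProc (d : ℕ) (P Q : Measure (Set (EuclideanSpace ℝ (Fin d)))) : ℝ≥0∞ :=
  Filter.atTop.liminf fun R : ℝ =>
    ENNReal.ofReal (R ^ (-(d : ℝ))) *
      KL (Measure.map (· ∩ cube d R) P) (Measure.map (· ∩ cube d R) Q)

/-- `Q` is the law of the Poisson point process of intensity 1 on `ℝ^d`. -/
def isPoisson (d : ℕ) (Q : Measure (Set (EuclideanSpace ℝ (Fin d)))) : Prop :=
  IsProbabilityMeasure Q ∧
  (∀ A : Set (EuclideanSpace ℝ (Fin d)), MeasurableSet A → volume A ≠ ∞ → ∀ n : ℕ,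
    Q {C | (C ∩ A).encard = n} =
      ENNReal.ofReal (Real.exp (-(volume A).toReal) * (volume A).toReal ^ n / n.factorial)) ∧
  ∀ (n : ℕ) (A : Fin n → Set (EuclideanSpace ℝ (Fin d))),
    Pairwise (Function.onFun Disjoint A) →
      ProbabilityTheory.iIndepFun
        (fun i C => (C ∩ A i).encard) Q

/-- Rescaling a configuration by `m^(1/d)`. -/
def scaleConfig (d : ℕ) (m : ℝ) (C : Set (EuclideanSpace ℝ (Fin d))) :
    Set (EuclideanSpace ℝ (Fin d)) :=
  (fun x => (m ^ ((1 : ℝ) / d)) • x) '' C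

end

/-!
Sort the points `x₀ < ⋯ < x_{N-1}` of `[-1/2, 1/2]` and group the energy by index gaps:
`E = 2 ∑_{k ≥ 1} ∑_{i < N - k} (x_{i+k} - x_i)^{-s}`. For fixed `k` the `N - k` gaps
`x_{i+k} - x_i` have total length at most `k`, so by convexity of `t ↦ t^{-s}` they contribute at
least `(N - k)^{1+s} k^{-s}`; after division by `N^{1+s}` this tends to `k^{-s}`, and summing over
`k ≤ K` for every `K` gives `liminf ≥ 2 ζ(s)`. Conversely the `N` equally spaced points
`(i + 1/2)/N - 1/2` have `k`-gaps exactly `k/N`, so their energy is at most `2 N^{1+s} ζ(s)`.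
-/

open Finset

theorem Finset.sum_range_sum_range_eq_sum_Ico_sum_range {M : Type*} [AddCommMonoid M] (N : ℕ)
    (f : ℕ → ℕ → M) :
    ∑ j ∈ range N, ∑ i ∈ range j, f i j
      = ∑ k ∈ Finset.Ico 1 N, ∑ i ∈ range (N - k), f i (i + k) := by
  rw [sum_sigma', sum_sigma']
  refine sum_nbij' (fun p => ⟨p.1 - p.2, p.2⟩) (fun p => ⟨p.2 + p.1, p.2⟩) ?_ ?_ ?_ ?_ ?_ <;>
    simp only [mem_sigma, mem_range, mem_Ico, Sigma.forall, Sigma.mk.injEq, heq_eq_eq,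
      and_true] <;>
    intro a b h
  all_goals first | omega | (congr 1; omega)

theorem Finset.sum_range_sum_range_ite_eq_two_nsmul {M : Type*} [AddCommMonoid M] (N : ℕ)
    (g : ℕ → ℕ → M) (hg : ∀ i j, g i j = g j i) :
    ∑ i ∈ range N, ∑ j ∈ range N, (if i = j then 0 else g i j)
      = 2 • ∑ j ∈ range N, ∑ i ∈ range j, g i j := by
  induction N with
  | zero => simp
  | succ N ih =>
    have hrow : ∀ i ∈ range N, (if i = N then 0 else g i N) = g i N := fun i hi =>
      if_neg (mem_range.1 hi).ne
    have hcol : ∀ j ∈ range N, (if N = j then 0 else g N j) = g j N := fun j hj =>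
      (if_neg (mem_range.1 hj).ne').trans (hg N j)
    simp only [sum_range_succ, ih, two_nsmul, sum_add_distrib, if_pos, sum_congr rfl hrow,
      sum_congr rfl hcol, add_zero]
    abel

theorem convexOn_rpow_neg {p : ℝ} (hp : 1 ≤ p) :
    ConvexOn ℝ (Set.Ioi 0) fun x : ℝ => x ^ (-p) := by
  have himage : (fun x : ℝ => x ^ (-1 : ℤ)) '' Set.Ioi 0 = Set.Ioi 0 := by
    ext y
    simp only [Set.mem_image, Set.mem_Ioi, zpow_neg_one]
    exact ⟨fun ⟨x, hx, hxy⟩ => hxy ▸ inv_pos.2 hx, fun hy => ⟨y⁻¹, inv_pos.2 hy, inv_inv y⟩⟩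
  have hconv : ConvexOn ℝ (Set.Ioi 0) fun u : ℝ => u ^ p :=
    (convexOn_rpow hp).subset Set.Ioi_subset_Ici_self (convex_Ioi 0)
  have hmono : MonotoneOn (fun u : ℝ => u ^ p) (Set.Ioi 0) := fun u hu v _ huv =>
    Real.rpow_le_rpow (le_of_lt hu) huv (by linarith)
  rw [← himage] at hconv hmono
  refine (hconv.comp (convexOn_zpow (-1)) hmono).congr ?_
  intro x hx
  simp [Real.rpow_neg (le_of_lt hx), Real.inv_rpow (le_of_lt hx)]

theorem Real.card_rpow_mul_rpow_neg_le_sum_rpow_neg {ι : Type*} (t : Finset ι) {a : ι → ℝ}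
    (ha : ∀ i ∈ t, 0 < a i) {c : ℝ} (hc : 0 < c) (hsum : ∑ i ∈ t, a i ≤ c) {s : ℝ}
    (hs : 1 ≤ s) :
    (#t : ℝ) ^ (1 + s) * c ^ (-s) ≤ ∑ i ∈ t, a i ^ (-s) := by
  rcases t.eq_empty_or_nonempty with rfl | ht
  · simp [Real.zero_rpow (by linarith : 1 + s ≠ 0)]
  have hn : (0 : ℝ) < #t := by exact_mod_cast ht.card_pos
  have hjensen := (convexOn_rpow_neg hs).map_sum_le (t := t) (w := fun _ => (#t : ℝ)⁻¹)
    (fun _ _ => by positivity) (by simp [hn.ne']) ha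
  simp only [smul_eq_mul, ← mul_sum] at hjensen
  calc (#t : ℝ) ^ (1 + s) * c ^ (-s) = #t * ((#t : ℝ)⁻¹ * c) ^ (-s) := by
        rw [Real.mul_rpow (by positivity) hc.le, Real.inv_rpow hn.le, Real.rpow_neg hn.le,
          inv_inv, Real.rpow_add hn, Real.rpow_one, mul_assoc]
    _ ≤ #t * ((#t : ℝ)⁻¹ * ∑ i ∈ t, a i) ^ (-s) := by
        refine mul_le_mul_of_nonneg_left ?_ hn.le
        have hpos : 0 < (#t : ℝ)⁻¹ * ∑ i ∈ t, a i := mul_pos (inv_pos.2 hn) (sum_pos ha ht)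
        exact Real.rpow_le_rpow_of_nonpos hpos (by gcongr) (by linarith : -s ≤ 0)
    _ ≤ ∑ i ∈ t, a i ^ (-s) := by
        rw [← le_div_iff₀' hn, div_eq_inv_mul]
        exact hjensen

theorem ENNReal.card_rpow_mul_ofReal_rpow_neg_le_sum {ι : Type*} (t : Finset ι) {a : ι → ℝ}
    (ha : ∀ i ∈ t, 0 < a i) {c : ℝ} (hc : 0 < c) (hsum : ∑ i ∈ t, a i ≤ c) {s : ℝ}
    (hs : 1 ≤ s) :
    (#t : ℝ≥0∞) ^ (1 + s) * ENNReal.ofReal c ^ (-s) ≤ ∑ i ∈ t, ENNReal.ofReal (a i) ^ (-s) := by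
  rw [sum_congr rfl fun i hi => ENNReal.ofReal_rpow_of_pos (ha i hi),
    ← ENNReal.ofReal_sum_of_nonneg fun i hi => Real.rpow_nonneg (ha i hi).le _,
    ENNReal.ofReal_rpow_of_pos hc,
    ← ENNReal.ofReal_natCast, ENNReal.ofReal_rpow_of_nonneg (Nat.cast_nonneg _) (by linarith),
    ← ENNReal.ofReal_mul (by positivity)]
  exact ENNReal.ofReal_le_ofReal (Real.card_rpow_mul_rpow_neg_le_sum_rpow_neg t ha hc hsum hs)

theorem Finset.sum_range_sub_shift_le {x : ℕ → ℝ} {L : ℝ} (hx : ∀ i j, x i - x j ≤ L)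
    (n k : ℕ) : ∑ i ∈ range n, (x (i + k) - x i) ≤ k * L := by
  -- both sides equal `∑ i < n + k, x i - ∑ i < n, x i - ∑ i < k, x i`
  have hswap : ∑ i ∈ range n, (x (i + k) - x i) = ∑ i ∈ range k, (x (n + i) - x i) := by
    have h1 := sum_range_add x k n
    have h2 := sum_range_add x n k
    rw [add_comm k n] at h1
    simp only [sum_sub_distrib, add_comm _ k]
    linarith
  rw [hswap]
  calc ∑ i ∈ range k, (x (n + i) - x i) ≤ ∑ _i ∈ range k, L := sum_le_sum fun i _ => hx _ _
    _ = k * L := by simp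

theorem EuclideanSpace.edist_eq_ofReal_abs_sub_fin_one (x y : EuclideanSpace ℝ (Fin 1)) :
    edist x y = ENNReal.ofReal |x 0 - y 0| := by
  rw [edist_dist, EuclideanSpace.dist_eq, Fin.sum_univ_one, Real.dist_eq, Real.sqrt_sq_eq_abs,
    abs_abs]

theorem Esfin_one_eq_two_mul_sum_gap (s : ℝ) {N : ℕ} (ω : Fin N → EuclideanSpace ℝ (Fin 1)) (x : ℕ → ℝ)
    (hx : ∀ i : Fin N, ω i 0 = x i) :
    Esfin 1 s ω =
      2 * ∑ k ∈ Finset.Ico 1 N, ∑ i ∈ range (N - k), ENNReal.ofReal |x i - x (i + k)| ^ (-s) := by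
  have hrange : Esfin 1 s ω = ∑ i ∈ range N, ∑ j ∈ range N,
      (if i = j then 0 else ENNReal.ofReal |x i - x j| ^ (-s)) := by
    simp only [Esfin, EuclideanSpace.edist_eq_ofReal_abs_sub_fin_one, hx, Fin.ext_iff]
    rw [← Fin.sum_univ_eq_sum_range]
    simp only [← Fin.sum_univ_eq_sum_range (fun j => if _ = j then _ else _)]
  rw [hrange, sum_range_sum_range_ite_eq_two_nsmul _ _ fun i j => by rw [abs_sub_comm],
    sum_range_sum_range_eq_sum_Ico_sum_range, two_nsmul, two_mul]

theorem Esfin_comp_perm (d : ℕ) (s : ℝ) {N : ℕ} (ω : Fin N → EuclideanSpace ℝ (Fin d))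
    (σ : Equiv.Perm (Fin N)) : Esfin d s (ω ∘ σ) = Esfin d s ω :=
  Fintype.sum_equiv σ _ _ fun i => Fintype.sum_equiv σ _ _ fun j => by simp [σ.injective.eq_iff]

theorem Esfin_eq_top_of_not_injective (d : ℕ) {s : ℝ} (hs : 0 < s) {N : ℕ}
    {ω : Fin N → EuclideanSpace ℝ (Fin d)} (hω : ¬ Function.Injective ω) : Esfin d s ω = ⊤ := by
  obtain ⟨i, j, hij, hne⟩ := Function.not_injective_iff.1 hω
  refine top_le_iff.1 (le_trans ?_ (single_le_sum (fun _ _ => zero_le) (mem_univ i)))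
  refine le_trans ?_ (single_le_sum (fun _ _ => zero_le) (mem_univ j))
  simp [hne, hij, ENNReal.zero_rpow_of_neg (neg_neg_of_pos hs)]

theorem ENNReal.tsum_pnat_eq_iSup_sum_Icc (f : ℕ → ℝ≥0∞) :
    ∑' n : ℕ+, f n = ⨆ K : ℕ, ∑ k ∈ Finset.Icc 1 K, f k := by
  rw [tsum_pnat_eq_tsum_succ, ENNReal.tsum_eq_iSup_nat]
  congr! 2 with K
  rw [range_eq_Ico, sum_Ico_add' f, zero_add, Finset.Ico_add_one_right_eq_Icc]

theorem ENNReal.natCast_div_rpow_neg {k : ℕ} (hk : k ≠ 0) (N : ℕ) (s : ℝ) :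
    ((k : ℝ≥0∞) / N) ^ (-s) = (N : ℝ≥0∞) ^ s * (k : ℝ≥0∞) ^ (-s) := by
  rw [div_eq_mul_inv, ENNReal.mul_rpow_of_ne_zero (by exact_mod_cast hk) (by simp),
    ENNReal.inv_rpow, ENNReal.rpow_neg (N : ℝ≥0∞), inv_inv, mul_comm]

theorem sum_Ico_sum_range_natCast_div_rpow_neg_le (s : ℝ) (N : ℕ) :
    ∑ k ∈ Finset.Ico 1 N, ∑ _i ∈ range (N - k), ((k : ℝ≥0∞) / N) ^ (-s)
      ≤ (N : ℝ≥0∞) ^ (1 + s) * ∑' n : ℕ+, (n : ℝ≥0∞) ^ (-s) := by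
  calc ∑ k ∈ Finset.Ico 1 N, ∑ _i ∈ range (N - k), ((k : ℝ≥0∞) / N) ^ (-s)
      = ∑ k ∈ Finset.Ico 1 N, ((N - k : ℕ) : ℝ≥0∞) * ((N : ℝ≥0∞) ^ s * (k : ℝ≥0∞) ^ (-s)) :=
        sum_congr rfl fun k hk => by
          rw [sum_const, card_range, nsmul_eq_mul,
            ENNReal.natCast_div_rpow_neg (by have := (Finset.mem_Ico.1 hk).1; omega)]
    _ ≤ ∑ k ∈ Finset.Ico 1 N, (N : ℝ≥0∞) ^ (1 + s) * (k : ℝ≥0∞) ^ (-s) := by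
        refine sum_le_sum fun k hk => ?_
        have hN : (N : ℝ≥0∞) ≠ 0 := Nat.cast_ne_zero.2 (by have := (Finset.mem_Ico.1 hk).2; omega)
        calc ((N - k : ℕ) : ℝ≥0∞) * ((N : ℝ≥0∞) ^ s * (k : ℝ≥0∞) ^ (-s))
            ≤ N * ((N : ℝ≥0∞) ^ s * (k : ℝ≥0∞) ^ (-s)) := by gcongr; exact Nat.sub_le N k
          _ = (N : ℝ≥0∞) ^ (1 + s) * (k : ℝ≥0∞) ^ (-s) := by
            rw [ENNReal.rpow_add _ _ hN (ENNReal.natCast_ne_top N), ENNReal.rpow_one, mul_assoc]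
    _ ≤ (N : ℝ≥0∞) ^ (1 + s) * ∑' n : ℕ+, (n : ℝ≥0∞) ^ (-s) := by
        rw [← mul_sum, ENNReal.tsum_pnat_eq_iSup_sum_Icc (fun k => (k : ℝ≥0∞) ^ (-s))]
        gcongr
        exact (sum_le_sum_of_subset Finset.Ico_subset_Icc_self).trans
          (le_iSup (fun K : ℕ => ∑ k ∈ Finset.Icc 1 K, (k : ℝ≥0∞) ^ (-s)) N)

theorem minEs_cube_one_le (s : ℝ) (N : ℕ) :
    minEs 1 s (cube 1 1) N ≤ 2 * ((N : ℝ≥0∞) ^ (1 + s) * ∑' n : ℕ+, (n : ℝ≥0∞) ^ (-s)) := by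
  set x : ℕ → ℝ := fun i => (i + 1 / 2) / N - 1 / 2
  have hmem : ∀ i : Fin N, WithLp.toLp 2 (fun _ => x i) ∈ cube 1 1 := by
    intro i _
    have hN : (0 : ℝ) < N := by exact_mod_cast i.pos
    have hi : (i : ℝ) + 1 ≤ N := by exact_mod_cast i.isLt
    have h0 : 0 ≤ ((i : ℝ) + 1 / 2) / N := by positivity
    have h1 : ((i : ℝ) + 1 / 2) / N ≤ 1 := (div_le_one hN).2 (by linarith)
    simp only [x, abs_le]
    constructor <;> linarith
  have hgap : ∀ i k : ℕ, x (i + k) - x i = k / N := fun i k => by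
    simp only [x]; push_cast; ring
  refine (iInf₂_le _ hmem).trans ?_
  rw [Esfin_one_eq_two_mul_sum_gap s _ x fun i => rfl]
  gcongr 2 * ?_
  refine le_of_eq_of_le (sum_congr rfl fun k hk => sum_congr rfl fun i _ => ?_)
    (sum_Ico_sum_range_natCast_div_rpow_neg_le s N)
  have hN : (0 : ℝ) < N := Nat.cast_pos.2 (by have := (Finset.mem_Ico.1 hk).2; omega)
  rw [abs_sub_comm, hgap, abs_of_nonneg (by positivity), ENNReal.ofReal_div_of_pos hN,
    ENNReal.ofReal_natCast, ENNReal.ofReal_natCast]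

theorem le_sum_range_ofReal_abs_sub_rpow_neg {s : ℝ} (hs : 1 ≤ s) {N k : ℕ} (hk : 1 ≤ k)
    {x : ℕ → ℝ} (hx : ∀ i j, x i - x j ≤ 1) (hmono : ∀ i, i + k < N → x i < x (i + k)) :
    ((N - k : ℕ) : ℝ≥0∞) ^ (1 + s) * (k : ℝ≥0∞) ^ (-s)
      ≤ ∑ i ∈ range (N - k), ENNReal.ofReal |x i - x (i + k)| ^ (-s) := by
  have hgap : ∀ i ∈ range (N - k), 0 < x (i + k) - x i := fun i hi =>
    sub_pos.2 (hmono i (by have := mem_range.1 hi; omega))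
  have hsum : ∑ i ∈ range (N - k), (x (i + k) - x i) ≤ k := by
    simpa using sum_range_sub_shift_le hx (N - k) k
  have hk' : (0 : ℝ) < k := by exact_mod_cast hk
  rw [sum_congr rfl fun i hi => by rw [abs_sub_comm, abs_of_pos (hgap i hi)]]
  simpa [ENNReal.ofReal_natCast] using
    ENNReal.card_rpow_mul_ofReal_rpow_neg_le_sum _ hgap hk' hsum hs

theorem le_Esfin_of_strictMono {s : ℝ} (hs : 1 ≤ s) {N : ℕ}
    (ω : Fin N → EuclideanSpace ℝ (Fin 1)) (hω : ∀ i, ω i ∈ cube 1 1)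
    (hmono : StrictMono fun i => ω i 0) :
    2 * ∑ k ∈ Finset.Ico 1 N, ((N - k : ℕ) : ℝ≥0∞) ^ (1 + s) * (k : ℝ≥0∞) ^ (-s)
      ≤ Esfin 1 s ω := by
  set x : ℕ → ℝ := fun n => if h : n < N then ω ⟨n, h⟩ 0 else 0
  have hbound : ∀ n, |x n| ≤ 1 / 2 := by
    intro n
    by_cases h : n < N
    · simpa [x, h] using hω ⟨n, h⟩ 0
    · simp [x, h]
  have hx : ∀ i j, x i - x j ≤ 1 := fun i j => by
    have := abs_le.1 (hbound i); have := abs_le.1 (hbound j); linarith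
  rw [Esfin_one_eq_two_mul_sum_gap s ω x fun i => by simp [x]]
  gcongr 2 * ?_
  refine sum_le_sum fun k hk => ?_
  obtain ⟨hk1, -⟩ := Finset.mem_Ico.1 hk
  refine le_sum_range_ofReal_abs_sub_rpow_neg hs hk1 hx fun i hi => ?_
  simpa [x, hi, show i < N by omega] using
    hmono (Fin.mk_lt_mk.2 (by omega) : (⟨i, by omega⟩ : Fin N) < ⟨i + k, hi⟩)

theorem le_minEs_cube_one {s : ℝ} (hs : 1 ≤ s) (N : ℕ) :
    2 * ∑ k ∈ Finset.Ico 1 N, ((N - k : ℕ) : ℝ≥0∞) ^ (1 + s) * (k : ℝ≥0∞) ^ (-s)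
      ≤ minEs 1 s (cube 1 1) N := by
  refine le_iInf₂ fun ω hω => ?_
  set r : Fin N → ℝ := fun i => ω i 0
  by_cases hr : Function.Injective r
  · rw [← Esfin_comp_perm 1 s ω (Tuple.sort r)]
    exact le_Esfin_of_strictMono hs _ (fun i => hω _)
      ((Tuple.monotone_sort r).strictMono_of_injective (hr.comp (Tuple.sort r).injective))
  · have hω : ¬ Function.Injective ω := fun hinj => hr fun i j hij =>
      hinj (by ext k; rw [Fin.fin_one_eq_zero k]; exact hij)
    rw [Esfin_eq_top_of_not_injective 1 (by linarith) hω]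
    exact le_top

theorem ENNReal.tendsto_sum_natSub_rpow_mul_div_rpow {p : ℝ} (hp : 0 ≤ p) (t : Finset ℕ)
    (c : ℕ → ℝ≥0∞) :
    Tendsto (fun N : ℕ => (∑ k ∈ t, ((N - k : ℕ) : ℝ≥0∞) ^ p * c k) / (N : ℝ≥0∞) ^ p)
      atTop (𝓝 (∑ k ∈ t, c k)) := by
  have hratio : ∀ k : ℕ,
      Tendsto (fun N : ℕ => ((N - k : ℕ) : ℝ≥0∞) ^ p / (N : ℝ≥0∞) ^ p) atTop (𝓝 1) := by
    intro k
    rw [← tendsto_add_atTop_iff_nat k]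
    have h : Tendsto (fun n : ℕ => ((n : NNReal) / (n + k) : NNReal)) atTop (𝓝 1) :=
      tendsto_natCast_div_add_atTop _
    have h' : Tendsto (fun n : ℕ => (n : ℝ≥0∞) / ((n + k : ℕ) : ℝ≥0∞)) atTop (𝓝 1) := by
      refine (ENNReal.tendsto_coe.2 h).congr' ?_
      filter_upwards [eventually_ge_atTop 1] with n hn
      rw [ENNReal.coe_div (by positivity)]
      norm_cast
    have := (ENNReal.continuous_rpow_const (y := p)).tendsto 1 |>.comp h'
    rw [ENNReal.one_rpow] at this
    refine this.congr fun n => ?_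
    simp [ENNReal.div_rpow_of_nonneg _ _ hp]
  simp only [div_eq_mul_inv, sum_mul]
  refine tendsto_finsetSum _ fun k _ => ?_
  have h := ENNReal.Tendsto.mul_const (hratio k) (b := c k) (Or.inl one_ne_zero)
  rw [one_mul] at h
  exact h.congr fun N => by rw [div_eq_mul_inv, mul_right_comm]

/-- For `s > 1`, the asymptotic minimal Riesz `s`-energy constant in
dimension 1 equals `2 ζ(s)`. -/
theorem riesz_constant_dim_one (s : ℝ) (hs : 1 < s) :
    Filter.Tendsto (fun N : ℕ => minEs 1 s (cube 1 1) N / (N : ℝ≥0∞) ^ (1 + s))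
      Filter.atTop (nhds (2 * ∑' n : ℕ+, (n : ℝ≥0∞) ^ (-s))) := by
  refine tendsto_of_le_liminf_of_limsup_le ?_ ?_
  · rw [ENNReal.tsum_pnat_eq_iSup_sum_Icc (fun n => (n : ℝ≥0∞) ^ (-s)), ENNReal.mul_iSup]
    refine iSup_le fun K => ?_
    have hlim := ENNReal.Tendsto.const_mul (a := 2)
      (ENNReal.tendsto_sum_natSub_rpow_mul_div_rpow (by linarith : 0 ≤ 1 + s) (Finset.Icc 1 K)
        fun k => (k : ℝ≥0∞) ^ (-s)) (Or.inr ENNReal.ofNat_ne_top)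
    refine hlim.liminf_eq.symm.le.trans (liminf_le_liminf ?_)
    filter_upwards [eventually_gt_atTop K] with N hN
    rw [← mul_div_assoc]
    gcongr
    refine le_trans ?_ (le_minEs_cube_one hs.le N)
    gcongr 2 * ?_
    exact sum_le_sum_of_subset fun k hk => by
      simp only [Finset.mem_Icc, Finset.mem_Ico] at hk ⊢; omega
  · exact limsup_le_of_le (by isBoundedDefault) (Eventually.of_forall fun N =>
      ENNReal.div_le_of_le_mul ((minEs_cube_one_le s N).trans_eq (by ring)))
end

section
/- Lower bound half of the minimization: for any infinite point configuration C ⊂ ℝ^d of density 1, W_s(C) ≥ C_{s,d}. -/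
open scoped Classical

open MeasureTheory Filter Topology ENNReal Set

/-! Fix `b < 1`. Since `C` has density one, for large `R` the set `C ∩ K_R` has at least
`N = ⌈b R^d⌉` points, and shrinking `N` of them by the factor `R` into `K_1` shows that its energy
is at least `R^{-s} E_s(K_1, N) ≈ C_{s,d} N^{1+s/d} R^{-s} ≥ C_{s,d} b^{1+s/d} R^d`.
Hence `W_s(C) ≥ b^{1+s/d} C_{s,d}`, and we let `b → 1`. -/

section

open scoped Pointwise

variable {d : ℕ} {s : ℝ}

lemma cube_eq_smul_cube {R : ℝ} (hR : 0 < R) : cube d R = R • cube d 1 := by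
  ext x
  simp only [cube, Set.mem_smul_set_iff_inv_smul_mem₀ hR.ne', Set.mem_ofPred_eq,
    PiLp.smul_apply, smul_eq_mul, abs_mul, abs_inv, abs_of_pos hR]
  refine forall_congr' fun i => ?_
  rw [inv_mul_le_iff₀ hR]
  ring_nf

lemma Esfin_smul (c : ℝ) {N : ℕ} (ω : Fin N → EuclideanSpace ℝ (Fin d)) :
    Esfin d s (c • ω) = ‖c‖ₑ ^ (-s) * Esfin d s ω := by
  simp only [Esfin, Finset.mul_sum, mul_ite, mul_zero, Pi.smul_apply, edist_smul₀,
    ENNReal.smul_def, smul_eq_mul, ← enorm_eq_nnnorm,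
    ENNReal.mul_rpow_of_ne_top enorm_ne_top (edist_ne_top _ _)]

lemma enorm_rpow_mul_minEs_le_minEs_smul {c : ℝ} (hc : c ≠ 0)
    (A : Set (EuclideanSpace ℝ (Fin d))) (N : ℕ) :
    ‖c‖ₑ ^ (-s) * minEs d s A N ≤ minEs d s (c • A) N := by
  refine le_iInf₂ fun ω hω => ?_
  have hω' : ∀ i, (c⁻¹ • ω) i ∈ A := fun i =>
    (Set.mem_smul_set_iff_inv_smul_mem₀ hc _ _).1 (hω i)
  calc ‖c‖ₑ ^ (-s) * minEs d s A N ≤ ‖c‖ₑ ^ (-s) * Esfin d s (c⁻¹ • ω) :=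
        mul_le_mul_right (iInf₂_le _ hω') _
    _ = Esfin d s ω := by rw [← Esfin_smul, smul_inv_smul₀ hc]

lemma Esfin_le_interE {A : Set (EuclideanSpace ℝ (Fin d))} {N : ℕ} (g : Fin N ↪ A) :
    Esfin d s (fun i => (g i : EuclideanSpace ℝ (Fin d))) ≤ interE d s A A := by
  let F (p q : A) : ℝ≥0∞ := if (p : EuclideanSpace ℝ (Fin d)) = q then 0
    else edist (p : EuclideanSpace ℝ (Fin d)) q ^ (-s)
  calc Esfin d s (fun i => (g i : EuclideanSpace ℝ (Fin d))) = ∑' i, ∑' j, F (g i) (g j) := by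
        simp only [Esfin, F, tsum_fintype, Subtype.coe_inj, EmbeddingLike.apply_eq_iff_eq]
    _ ≤ ∑' p, ∑' j, F p (g j) :=
        ENNReal.tsum_comp_le_tsum_of_injective g.injective fun p => ∑' j, F p (g j)
    _ ≤ interE d s A A :=
        ENNReal.tsum_le_tsum fun p => ENNReal.tsum_comp_le_tsum_of_injective g.injective (F p)

lemma minEs_le_interE {A B : Set (EuclideanSpace ℝ (Fin d))} (hAB : A ⊆ B) {N : ℕ}
    (hN : (N : ℕ∞) ≤ A.encard) : minEs d s B N ≤ interE d s A A := by
  obtain ⟨g⟩ : Nonempty (Fin N ↪ A) := by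
    rwa [← Cardinal.le_def, Cardinal.mk_fin, ← Cardinal.natCast_le_toENat]
  exact (iInf₂_le _ fun i => hAB (g i).2).trans (Esfin_le_interE g)

lemma rpow_neg_mul_minEs_le_interE {R : ℝ} (hR : 0 < R) {A : Set (EuclideanSpace ℝ (Fin d))}
    (hA : A ⊆ cube d R) {N : ℕ} (hN : (N : ℕ∞) ≤ A.encard) :
    ENNReal.ofReal (R ^ (-s)) * minEs d s (cube d 1) N ≤ interE d s A A := by
  calc ENNReal.ofReal (R ^ (-s)) * minEs d s (cube d 1) N
      = ‖R‖ₑ ^ (-s) * minEs d s (cube d 1) N := by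
        rw [Real.enorm_of_nonneg hR.le, ENNReal.ofReal_rpow_of_pos hR]
    _ ≤ minEs d s (cube d R) N := by
        rw [cube_eq_smul_cube hR]; exact enorm_rpow_mul_minEs_le_minEs_smul hR.ne' _ _
    _ ≤ interE d s A A := minEs_le_interE hA hN

lemma natCeil_le_of_ofReal_le {x : ℝ} {m : ℕ∞} (h : ENNReal.ofReal x ≤ m) : (⌈x⌉₊ : ℕ∞) ≤ m := by
  induction m using ENat.recTopCoe with
  | top => exact le_top
  | coe n =>
    rw [ENNReal.ofReal_le_iff_le_toReal (by simp)] at h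
    exact_mod_cast Nat.ceil_le.2 (by simpa using h)

lemma eventually_natCeil_le_encard_of_lt_Dens {C : Set (EuclideanSpace ℝ (Fin d))} {b : ℝ}
    (hb : ENNReal.ofReal b < Dens d C) :
    ∀ᶠ R in atTop, (⌈b * R ^ (d : ℝ)⌉₊ : ℕ∞) ≤ (C ∩ cube d R).encard := by
  filter_upwards [eventually_lt_of_lt_liminf hb, eventually_gt_atTop 0] with R hR hR0
  refine natCeil_le_of_ofReal_le ?_
  rw [ENNReal.ofReal_mul' (Real.rpow_nonneg hR0.le _)]
  exact_mod_cast ENNReal.mul_le_of_le_div hR.le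

lemma ofReal_rpow_mul_minEs_div_le_interE (hd : 0 < d) (hs : 0 ≤ s)
    {A : Set (EuclideanSpace ℝ (Fin d))} {R b : ℝ} (hR : 0 < R) (hb : 0 < b) (hA : A ⊆ cube d R)
    {N : ℕ} (hbN : b * R ^ (d : ℝ) ≤ N) (hN : (N : ℕ∞) ≤ A.encard) :
    ENNReal.ofReal (b ^ (1 + s / d)) * (minEs d s (cube d 1) N / (N : ℝ≥0∞) ^ (1 + s / d)) ≤
      ENNReal.ofReal (R ^ (-(d : ℝ))) * interE d s A A := by
  set p := 1 + s / d
  have hp : 0 ≤ p := by positivity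
  have hdp : (d : ℝ) * p = d + s := by
    rw [mul_add, mul_one, mul_div_cancel₀ _ (by positivity)]
  have hN0 : 0 < (N : ℝ) := (by positivity : 0 < b * R ^ (d : ℝ)).trans_le hbN
  have hNp : (N : ℝ≥0∞) ^ p = ENNReal.ofReal ((N : ℝ) ^ p) := by
    rw [← ENNReal.ofReal_rpow_of_nonneg hN0.le hp, ENNReal.ofReal_natCast]
  have hscale : b ^ p ≤ R ^ (-(d : ℝ)) * R ^ (-s) * (N : ℝ) ^ p :=
    calc b ^ p = R ^ (-(d : ℝ)) * R ^ (-s) * (b * R ^ (d : ℝ)) ^ p := by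
          rw [Real.mul_rpow hb.le (by positivity), ← Real.rpow_mul hR.le, hdp,
            Real.rpow_add hR, Real.rpow_neg hR.le, Real.rpow_neg hR.le]
          field_simp
      _ ≤ R ^ (-(d : ℝ)) * R ^ (-s) * (N : ℝ) ^ p := by gcongr
  set f := minEs d s (cube d 1) N / (N : ℝ≥0∞) ^ p
  have hf : minEs d s (cube d 1) N = f * (N : ℝ≥0∞) ^ p := by
    refine (ENNReal.div_mul_cancel ?_ ?_).symm <;> simp [hNp, Real.rpow_pos_of_pos hN0]
  calc ENNReal.ofReal (b ^ p) * f
      ≤ ENNReal.ofReal (R ^ (-(d : ℝ)) * R ^ (-s) * (N : ℝ) ^ p) * f := by gcongr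
    _ = ENNReal.ofReal (R ^ (-(d : ℝ))) *
          (ENNReal.ofReal (R ^ (-s)) * minEs d s (cube d 1) N) := by
        rw [hf, hNp, ENNReal.ofReal_mul (by positivity), ENNReal.ofReal_mul (by positivity)]
        ring
    _ ≤ ENNReal.ofReal (R ^ (-(d : ℝ))) * interE d s A A := by
        gcongr
        exact rpow_neg_mul_minEs_le_interE hR hA hN

lemma ENNReal.le_of_forall_ofReal_rpow_mul_le {x y : ℝ≥0∞} (p : ℝ)
    (h : ∀ b : ℝ, 0 < b → b < 1 → ENNReal.ofReal (b ^ p) * x ≤ y) : x ≤ y := by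
  have hpow : Tendsto (fun b : ℝ => b ^ p) (𝓝[<] 1) (𝓝 1) := by
    simpa using ((Real.continuousAt_rpow_const 1 p (Or.inl one_ne_zero)).tendsto).mono_left
      nhdsWithin_le_nhds
  have hlim : Tendsto (fun b : ℝ => ENNReal.ofReal (b ^ p) * x) (𝓝[<] 1) (𝓝 x) := by
    simpa using ENNReal.Tendsto.mul_const (ENNReal.tendsto_ofReal hpow) (Or.inl (by simp))
  refine le_of_tendsto hlim ?_
  filter_upwards [Ioo_mem_nhdsLT zero_lt_one] with b hb using h b hb.1 hb.2

end

theorem Ws_ge_Csd_of_density_one_general (d : ℕ) (hd : 0 < d) (s : ℝ) (hs : (d : ℝ) < s)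
    (Csd : ℝ)
    (hC : Filter.Tendsto (fun N : ℕ => minEs d s (cube d 1) N / (N : ℝ≥0∞) ^ (1 + s / (d : ℝ)))
      Filter.atTop (nhds (ENNReal.ofReal Csd)))
    (C : Set (EuclideanSpace ℝ (Fin d))) (hdens : Dens d C = 1) :
    ENNReal.ofReal Csd ≤ Ws d s C := by
  have hs0 : 0 ≤ s := (Nat.cast_nonneg d).trans hs.le
  refine ENNReal.le_of_forall_ofReal_rpow_mul_le (1 + s / d) fun b hb0 hb1 => ?_
  set N : ℝ → ℕ := fun R => ⌈b * R ^ (d : ℝ)⌉₊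
  have hN : Tendsto N atTop atTop := tendsto_nat_ceil_atTop.comp
    ((tendsto_rpow_atTop (by exact_mod_cast hd)).const_mul_atTop hb0)
  have hcount : ∀ᶠ R in atTop, (N R : ℕ∞) ≤ (C ∩ cube d R).encard :=
    eventually_natCeil_le_encard_of_lt_Dens (hdens ▸ ENNReal.ofReal_lt_one.2 hb1)
  calc ENNReal.ofReal (b ^ (1 + s / d)) * ENNReal.ofReal Csd
      = liminf (fun R => ENNReal.ofReal (b ^ (1 + s / d)) *
          (minEs d s (cube d 1) (N R) / (N R : ℝ≥0∞) ^ (1 + s / d))) atTop :=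
        ((ENNReal.Tendsto.const_mul (hC.comp hN) (Or.inr ENNReal.ofReal_ne_top)).liminf_eq).symm
    _ ≤ Ws d s C := by
        refine liminf_le_liminf ?_
        filter_upwards [hcount, eventually_gt_atTop 0] with R hR hR0
        exact ofReal_rpow_mul_minEs_div_le_interE hd hs0 hR0 hb0 Set.inter_subset_right
          (Nat.le_ceil _) hR

/-- for any configuration of density 1, `W_s(C) ≥ C_{s,d}`. -/
theorem Ws_ge_Csd_of_density_one (d : ℕ) (hd : 0 < d) (s : ℝ) (hs : (d : ℝ) < s)
    (Csd : ℝ) (hCsd : 0 < Csd)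
    (hC : Filter.Tendsto (fun N : ℕ => minEs d s (cube d 1) N / (N : ℝ≥0∞) ^ (1 + s / (d : ℝ)))
      Filter.atTop (nhds (ENNReal.ofReal Csd)))
    (C : Set (EuclideanSpace ℝ (Fin d))) (hdens : Dens d C = 1) :
    ENNReal.ofReal Csd ≤ Ws d s C :=
  Ws_ge_Csd_of_density_one_general d hd s hs Csd hC C hdens
end

section
/- For a Λ-periodic point configuration ω_N + Λ (where ω_N is an N-point set in a fundamental domain of the lattice Λ), the infinite-volume Riesz energy satisfies W_s(ω_N + Λ) = E_{s,Λ}(ω_N)/|Λ|, where E_{s,Λ} is the periodic Riesz energy. -/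
open scoped Classical

open MeasureTheory Filter Topology ENNReal Set

noncomputable section

/-- The Bravais lattice `U ℤ^d` as a point configuration. -/
def lattice (d : ℕ) (U : Matrix (Fin d) (Fin d) ℝ) : Set (EuclideanSpace ℝ (Fin d)) :=
  Set.range fun z : Fin d → ℤ =>
    (EuclideanSpace.equiv (Fin d) ℝ).symm (U.mulVec fun i => (z i : ℝ))

/-- The fundamental domain `U [-1/2, 1/2)^d` of the lattice `U ℤ^d`. -/
def fundDomain (d : ℕ) (U : Matrix (Fin d) (Fin d) ℝ) : Set (EuclideanSpace ℝ (Fin d)) :=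
  (fun t : Fin d → ℝ => (EuclideanSpace.equiv (Fin d) ℝ).symm (U.mulVec t)) ''
    {t | ∀ i, -(1 / 2 : ℝ) ≤ t i ∧ t i < 1 / 2}

/-- The `Λ`-periodic configuration generated by the finite set `ω`. -/
def perConfig (d : ℕ) (U : Matrix (Fin d) (Fin d) ℝ)
    (ω : Finset (EuclideanSpace ℝ (Fin d))) : Set (EuclideanSpace ℝ (Fin d)) :=
  {y | ∃ x ∈ ω, ∃ v ∈ lattice d U, y = x + v}

/-- The `Λ`-periodic Riesz `s`-energy of `ω`. -/
def perEnergy (d : ℕ) (s : ℝ) (U : Matrix (Fin d) (Fin d) ℝ)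
    (ω : Finset (EuclideanSpace ℝ (Fin d))) : ℝ≥0∞ :=
  ∑ x ∈ ω, ∑' y : perConfig d U ω,
    if (y : EuclideanSpace ℝ (Fin d)) = x then 0
    else edist x (y : EuclideanSpace ℝ (Fin d)) ^ (-s)

/-- The Epstein zeta function `ζ_Λ(s) = Σ_{0 ≠ v ∈ Λ} |v|^{-s}`. -/
def epsteinZeta (d : ℕ) (s : ℝ) (U : Matrix (Fin d) (Fin d) ℝ) : ℝ≥0∞ :=
  ∑' v : lattice d U,
    if (v : EuclideanSpace ℝ (Fin d)) = 0 then 0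
    else edist 0 (v : EuclideanSpace ℝ (Fin d)) ^ (-s)

/-- The Epstein–Hurwitz zeta function `ζ_Λ(s, x) = Σ_{v ∈ Λ} |x + v|^{-s}`. -/
def epsteinHurwitzZeta (d : ℕ) (s : ℝ) (U : Matrix (Fin d) (Fin d) ℝ)
    (x : EuclideanSpace ℝ (Fin d)) : ℝ≥0∞ :=
  ∑' v : lattice d U, edist (x + (v : EuclideanSpace ℝ (Fin d))) 0 ^ (-s)

end

/-!
Parametrize `ω + Λ` by `ω × ℤ^d`. The potential `g(x) = Σ_{y ∈ ω + Λ, y ≠ x} |x - y|^{-s}` is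
`Λ`-periodic, so summing it over the points of `ω + Λ` in the cube `K_R` gives
`Σ_{x ∈ ω} #{v ∈ Λ : x + v ∈ K_R} g(x)`. Each of these counts lies between `(R - c)^d / |Λ|` and
`(R + c)^d / |Λ|`, since the translates of the parallelepiped `U [-1/2, 1/2)^d` by `Λ` tile `ℝ^d`
and have volume `|Λ|`. Dropping the points outside `K_R` from `g` bounds the energy in `K_R` by
`(R + c)^d E_{s,Λ}(ω) / |Λ|`. Conversely, a point of `K_{R - 2T}` has its whole `T`-ball inside
`K_R`, so the energy in `K_R` is at least `(R - 2T - c)^d / |Λ|` times the periodic energy truncated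
at range `T`, and the truncated energies increase to `E_{s,Λ}(ω)` as `T → ∞`.
-/

open Matrix Metric

noncomputable section

namespace PeriodicRiesz

theorem tsum_iSup_of_monotone {α ι : Type*} [Preorder ι] [IsDirectedOrder ι]
    {f : ι → α → ℝ≥0∞} (hf : Monotone f) : ∑' a, ⨆ i, f i a = ⨆ i, ∑' a, f i a := by
  simp_rw [ENNReal.tsum_eq_iSup_sum, ENNReal.finsetSum_iSup_of_monotone fun a _ _ h => hf h a]
  exact iSup_comm

section Potential

variable {E : Type*} [NormedAddCommGroup E] [DecidableEq E]

def rieszKernel (s : ℝ) (x y : E) : ℝ≥0∞ := if x = y then 0 else edist x y ^ (-s)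

theorem rieszKernel_add_right (s : ℝ) (x y v : E) :
    rieszKernel s (x + v) (y + v) = rieszKernel s x y := by
  rw [rieszKernel, rieszKernel, edist_add_right]
  exact if_congr (add_left_inj v) rfl rfl

def potential (s : ℝ) (A : Set E) (x : E) : ℝ≥0∞ := ∑' y : A, rieszKernel s x y

theorem potential_mono (s : ℝ) {A B : Set E} (h : A ⊆ B) (x : E) :
    potential s A x ≤ potential s B x :=
  ENNReal.tsum_mono_subtype _ h

theorem potential_add (s : ℝ) (A : Set E) (x v : E) :
    potential s A (x + v) = potential s ((· + v) ⁻¹' A) x := by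
  rw [potential, potential, ← ((Equiv.addRight v).subtypeEquiv fun _ => Iff.rfl).tsum_eq]
  exact tsum_congr fun y => rieszKernel_add_right s x y v

theorem iSup_potential_inter_closedBall (s : ℝ) (A : Set E) (x : E) :
    ⨆ n : ℕ, potential s (A ∩ closedBall x n) x = potential s A x := by
  have hmono : Monotone fun (n : ℕ) y =>
      (closedBall x n).indicator (A.indicator (rieszKernel s x)) y :=
    fun m n h y => indicator_le_indicator_of_subset
      (closedBall_subset_closedBall (Nat.cast_le.2 h)) (fun _ => zero_le) y
  simp_rw [potential, tsum_subtype, inter_comm A, ← indicator_indicator,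
    ← tsum_iSup_of_monotone hmono, ← indicator_iUnion_apply (M := ℝ≥0∞) rfl,
    iUnion_closedBall_nat, indicator_univ]

end Potential

theorem tendsto_ofReal_rpow_neg_mul_add_pow (d : ℕ) (c : ℝ) :
    Tendsto (fun R : ℝ => ENNReal.ofReal (R ^ (-(d : ℝ))) * ENNReal.ofReal ((R + c) ^ d))
      atTop (𝓝 1) := by
  have h : Tendsto (fun R : ℝ => ENNReal.ofReal ((1 + c / R) ^ d)) atTop (𝓝 1) := by
    simpa using ENNReal.tendsto_ofReal
      (((tendsto_const_nhds.div_atTop tendsto_id).const_add (1 : ℝ)).pow d)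
  refine h.congr' ?_
  filter_upwards [eventually_gt_atTop 0] with R hR
  rw [← ENNReal.ofReal_mul (Real.rpow_nonneg hR.le _), Real.rpow_neg hR.le,
    Real.rpow_natCast, ← inv_pow, ← mul_pow]
  congr 2
  field_simp

section Liminf

variable {d : ℕ} {I : ℝ → ℝ≥0∞} {K : ℝ≥0∞}

theorem liminf_rpow_neg_mul_le {c : ℝ}
    (h : ∀ᶠ R in atTop, I R ≤ ENNReal.ofReal ((R + c) ^ d) * K) :
    liminf (fun R : ℝ => ENNReal.ofReal (R ^ (-(d : ℝ))) * I R) atTop ≤ K := by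
  have hK := ENNReal.Tendsto.mul_const (b := K) (tendsto_ofReal_rpow_neg_mul_add_pow d c)
    (.inl one_ne_zero)
  rw [one_mul] at hK
  refine (liminf_le_liminf ?_).trans_eq hK.liminf_eq
  filter_upwards [h] with R hR
  rw [mul_assoc]
  gcongr

theorem le_liminf_rpow_neg_mul {c : ℝ}
    (h : ∀ᶠ R in atTop, ENNReal.ofReal ((R - c) ^ d) * K ≤ I R) :
    K ≤ liminf (fun R : ℝ => ENNReal.ofReal (R ^ (-(d : ℝ))) * I R) atTop := by
  have hK := ENNReal.Tendsto.mul_const (b := K) (tendsto_ofReal_rpow_neg_mul_add_pow d (-c))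
    (.inl one_ne_zero)
  rw [one_mul] at hK
  refine hK.liminf_eq.symm.trans_le (liminf_le_liminf ?_)
  filter_upwards [h] with R hR
  rw [mul_assoc, ← sub_eq_add_neg]
  gcongr

end Liminf

theorem eq_of_add_intCast_eq {a b : ℝ} (ha : a ∈ Ico (-(1 / 2)) (1 / 2))
    (hb : b ∈ Ico (-(1 / 2)) (1 / 2)) {m n : ℤ} (h : a + m = b + n) : m = n := by
  have floor_eq (c : ℝ) (hc : c ∈ Ico (-(1 / 2)) (1 / 2)) (k : ℤ) : ⌊c + k + 1 / 2⌋ = k := by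
    rw [add_right_comm, Int.floor_add_intCast,
      Int.floor_eq_zero_iff.2 ⟨by linarith [hc.1], by linarith [hc.2]⟩, zero_add]
  rw [← floor_eq a ha m, ← floor_eq b hb n, h]

section Lattice

variable {d : ℕ}

local notation "𝔼" => EuclideanSpace ℝ (Fin d)

def halfOpenCube (d : ℕ) : Set (Fin d → ℝ) := univ.pi fun _ => Ico (-(1 / 2)) (1 / 2)

theorem eq_of_add_intVec_eq {t t' : Fin d → ℝ} (ht : t ∈ halfOpenCube d)
    (ht' : t' ∈ halfOpenCube d) {z z' : Fin d → ℤ}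
    (h : t + (fun i => (z i : ℝ)) = t' + fun i => (z' i : ℝ)) : z = z' :=
  funext fun i => eq_of_add_intCast_eq (ht i trivial) (ht' i trivial) (congrFun h i)

def latticePoint (U : Matrix (Fin d) (Fin d) ℝ) : (Fin d → ℤ) →+ 𝔼 :=
  AddMonoidHom.mk' (fun z => (EuclideanSpace.equiv (Fin d) ℝ).symm (U *ᵥ fun i => (z i : ℝ)))
    fun z z' => by
      have h : (fun i => ((z + z') i : ℝ)) = (fun i => (z i : ℝ)) + fun i => (z' i : ℝ) :=
        funext fun _ => Int.cast_add _ _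
      rw [h, mulVec_add, map_add]

variable {U : Matrix (Fin d) (Fin d) ℝ} {ω : Finset (EuclideanSpace ℝ (Fin d))}

theorem fundDomain_eq_image :
    fundDomain d U =
      (fun t => (EuclideanSpace.equiv (Fin d) ℝ).symm (U *ᵥ t)) '' halfOpenCube d := by
  simp [fundDomain, halfOpenCube, Set.pi]

theorem perConfig_eq_range :
    perConfig d U ω = range fun w : ω × (Fin d → ℤ) => (w.1 : 𝔼) + latticePoint U w.2 := by
  ext y
  simp [perConfig, lattice, latticePoint, eq_comm]

theorem injective_add_latticePoint (hU : IsUnit U.det) (hω : ∀ x ∈ ω, x ∈ fundDomain d U) :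
    Function.Injective fun w : ω × (Fin d → ℤ) => (w.1 : 𝔼) + latticePoint U w.2 := by
  rintro ⟨⟨x, hx⟩, z⟩ ⟨⟨x', hx'⟩, z'⟩ h
  obtain ⟨t, ht, rfl⟩ := fundDomain_eq_image ▸ hω x hx
  obtain ⟨t', ht', rfl⟩ := fundDomain_eq_image ▸ hω x' hx'
  have hsum : t + (fun i => (z i : ℝ)) = t' + fun i => (z' i : ℝ) := by
    refine mulVec_injective_of_isUnit ((isUnit_iff_isUnit_det U).2 hU) ?_
    rw [mulVec_add, mulVec_add]
    exact congrArg WithLp.ofLp h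
  obtain rfl := eq_of_add_intVec_eq ht ht' hsum
  obtain rfl := add_right_cancel hsum
  rfl

theorem add_latticePoint_mem_perConfig {y : 𝔼} (z : Fin d → ℤ) :
    y + latticePoint U z ∈ perConfig d U ω ↔ y ∈ perConfig d U ω := by
  simp only [perConfig_eq_range, mem_range, Prod.exists]
  constructor
  · rintro ⟨x, z', h⟩
    exact ⟨x, z' - z, by rw [map_sub, ← add_sub_assoc, h, add_sub_cancel_right]⟩
  · rintro ⟨x, z', h⟩
    exact ⟨x, z' + z, by rw [map_add, ← add_assoc, h]⟩

theorem potential_perConfig_add_latticePoint (s : ℝ) (x : 𝔼) (z : Fin d → ℤ) :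
    potential s (perConfig d U ω) (x + latticePoint U z) = potential s (perConfig d U ω) x := by
  rw [potential_add]
  congr 1
  exact ext fun _ => add_latticePoint_mem_perConfig z

theorem potential_perConfig_inter_closedBall_add_latticePoint (s T : ℝ) (x : 𝔼)
    (z : Fin d → ℤ) :
    potential s (perConfig d U ω ∩ closedBall (x + latticePoint U z) T) (x + latticePoint U z) =
      potential s (perConfig d U ω ∩ closedBall x T) x := by
  rw [potential_add]
  congr 1
  ext y
  simp only [preimage_inter, mem_inter_iff, mem_preimage, add_latticePoint_mem_perConfig,
    mem_closedBall, dist_add_right]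

end Lattice

section Tiles

variable {d : ℕ} {U : Matrix (Fin d) (Fin d) ℝ}

def tile (U : Matrix (Fin d) (Fin d) ℝ) (c : Fin d → ℝ) : Set (Fin d → ℝ) :=
  (fun t => c + U *ᵥ t) '' halfOpenCube d

def tileRadius (U : Matrix (Fin d) (Fin d) ℝ) : ℝ := ∑ i, ∑ j, |U i j|

theorem tileRadius_nonneg (U : Matrix (Fin d) (Fin d) ℝ) : 0 ≤ tileRadius U :=
  Finset.sum_nonneg fun _ _ => Finset.sum_nonneg fun _ _ => abs_nonneg _

theorem abs_sub_le_tileRadius_of_mem_tile {c y : Fin d → ℝ} (hy : y ∈ tile U c) (i : Fin d) :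
    |y i - c i| ≤ tileRadius U := by
  obtain ⟨t, ht, rfl⟩ := hy
  have ht1 (j : Fin d) : |t j| ≤ 1 :=
    abs_le.2 ⟨by linarith [(ht j trivial).1], by linarith [(ht j trivial).2]⟩
  calc |(c + U *ᵥ t) i - c i| = |∑ j, U i j * t j| := by simp [mulVec, dotProduct]
    _ ≤ ∑ j, |U i j| := (Finset.abs_sum_le_sum_abs _ _).trans <| Finset.sum_le_sum fun j _ => by
        rw [abs_mul]
        exact mul_le_of_le_one_right (abs_nonneg _) (ht1 j)
    _ ≤ tileRadius U := Finset.single_le_sum (f := fun i => ∑ j, |U i j|)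
        (fun _ _ => Finset.sum_nonneg fun _ _ => abs_nonneg _) (Finset.mem_univ i)

theorem volume_halfOpenCube : volume (halfOpenCube d) = 1 := by
  rw [halfOpenCube, volume_pi_pi]
  simp only [Real.volume_Ico, Finset.prod_const, Finset.card_univ, Fintype.card_fin]
  norm_num

theorem volume_tile (c : Fin d → ℝ) : volume (tile U c) = ENNReal.ofReal |U.det| := by
  rw [show tile U c = (c + ·) '' (mulVecLin U '' halfOpenCube d) from (image_image ..).symm,
    image_add_left, measure_preimage_add, Measure.addHaar_image_linearMap, volume_halfOpenCube,
    mul_one, ← toLin'_apply', LinearMap.det_toLin']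

theorem measurableSet_tile (hU : IsUnit U.det) (c : Fin d → ℝ) : MeasurableSet (tile U c) :=
  (MeasurableSet.univ_pi fun _ => measurableSet_Ico).image_of_continuousOn_injOn
    (by fun_prop : Continuous fun t => c + U *ᵥ t).continuousOn
    ((add_right_injective c).comp
      (mulVec_injective_of_isUnit ((isUnit_iff_isUnit_det U).2 hU))).injOn

theorem pairwise_disjoint_tile (hU : IsUnit U.det) (c : Fin d → ℝ) :
    Pairwise (Function.onFun Disjoint fun z : Fin d → ℤ =>
      tile U (c + U *ᵥ fun i => (z i : ℝ))) := by
  intro z z' hzz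
  refine disjoint_left.2 ?_
  rintro - ⟨a, ha, rfl⟩ ⟨b, hb, h⟩
  refine hzz (eq_of_add_intVec_eq ha hb ?_)
  refine mulVec_injective_of_isUnit ((isUnit_iff_isUnit_det U).2 hU) ?_
  rw [mulVec_add, mulVec_add, add_comm (U *ᵥ a), add_comm (U *ᵥ b)]
  exact add_left_cancel (by simpa only [add_assoc] using h.symm)

theorem exists_mem_tile (hU : IsUnit U.det) (c y : Fin d → ℝ) :
    ∃ z : Fin d → ℤ, y ∈ tile U (c + U *ᵥ fun i => (z i : ℝ)) := by
  set t := U⁻¹ *ᵥ (y - c)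
  refine ⟨fun i => ⌊t i + 1 / 2⌋, t - fun i => (⌊t i + 1 / 2⌋ : ℝ), fun i _ => ?_, ?_⟩
  · have h₁ := Int.floor_le (t i + 1 / 2)
    have h₂ := Int.lt_floor_add_one (t i + 1 / 2)
    simp only [Pi.sub_apply, mem_Ico]
    constructor <;> linarith
  · dsimp only
    rw [mulVec_sub, add_add_sub_cancel, mulVec_mulVec, mul_nonsing_inv _ hU, one_mulVec,
      add_sub_cancel]

end Tiles

section Counting

variable {d : ℕ} {U : Matrix (Fin d) (Fin d) ℝ}

local notation "𝔼" => EuclideanSpace ℝ (Fin d)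

def latticeIndices (U : Matrix (Fin d) (Fin d) ℝ) (x : 𝔼) (Q : Set 𝔼) : Set (Fin d → ℤ) :=
  {z | x + latticePoint U z ∈ Q}

theorem volume_preimage_cube {R : ℝ} (hR : 0 ≤ R) :
    volume ((EuclideanSpace.equiv (Fin d) ℝ).symm ⁻¹' cube d R) = ENNReal.ofReal (R ^ d) := by
  have h : (EuclideanSpace.equiv (Fin d) ℝ).symm ⁻¹' cube d R =
      univ.pi fun _ => Icc (-(R / 2)) (R / 2) := by
    ext y
    simp only [mem_preimage, cube, mem_univ_pi, mem_Icc, abs_le]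
    rfl
  rw [h, volume_pi_pi]
  simp only [Real.volume_Icc, Finset.prod_const, Finset.card_univ, Fintype.card_fin]
  rw [← ENNReal.ofReal_pow (by linarith)]
  ring_nf

theorem encard_latticeIndices_mul_eq_volume (hU : IsUnit U.det) (x : 𝔼) (Q : Set 𝔼) :
    (latticeIndices U x Q).encard * ENNReal.ofReal |U.det| =
      volume (⋃ z ∈ latticeIndices U x Q, tile U (x.ofLp + U *ᵥ fun i => (z i : ℝ))) := by
  rw [measure_biUnion (to_countable _) ((pairwise_disjoint_tile hU _).set_pairwise _)
    fun _ _ => measurableSet_tile hU _]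
  simp_rw [volume_tile]
  exact (ENNReal.tsum_set_const _ _).symm

theorem encard_latticeIndices_cube_le (hU : IsUnit U.det) (x : 𝔼) {R : ℝ} (hR : 0 ≤ R) :
    ((latticeIndices U x (cube d R)).encard : ℝ≥0∞) ≤
      ENNReal.ofReal ((R + 2 * tileRadius U) ^ d) * ENNReal.ofReal |U.det|⁻¹ := by
  rw [ENNReal.ofReal_inv_of_pos (abs_pos.2 hU.ne_zero), ← div_eq_mul_inv,
    ENNReal.le_div_iff_mul_le (.inl (by simpa using hU.ne_zero)) (.inl ENNReal.ofReal_ne_top),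
    encard_latticeIndices_mul_eq_volume hU,
    ← volume_preimage_cube (by linarith [tileRadius_nonneg U])]
  refine measure_mono (iUnion₂_subset fun z hz y hy i => ?_)
  have hc : |x i + (U *ᵥ fun i => (z i : ℝ)) i| ≤ R / 2 := hz i
  have hy := abs_sub_le_tileRadius_of_mem_tile hy i
  have := abs_sub_abs_le_abs_sub (y i) (x i + (U *ᵥ fun i => (z i : ℝ)) i)
  show |y i| ≤ (R + 2 * tileRadius U) / 2
  simp only [Pi.add_apply] at hy
  linarith

theorem le_encard_latticeIndices_cube (hU : IsUnit U.det) (x : 𝔼) {R : ℝ}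
    (hR : 2 * tileRadius U ≤ R) :
    ENNReal.ofReal ((R - 2 * tileRadius U) ^ d) * ENNReal.ofReal |U.det|⁻¹ ≤
      (latticeIndices U x (cube d R)).encard := by
  rw [ENNReal.ofReal_inv_of_pos (abs_pos.2 hU.ne_zero), ← div_eq_mul_inv,
    ENNReal.div_le_iff_le_mul (.inl (by simpa using hU.ne_zero)) (.inl ENNReal.ofReal_ne_top),
    encard_latticeIndices_mul_eq_volume hU, ← volume_preimage_cube (by linarith)]
  refine measure_mono fun y hy => ?_
  obtain ⟨z, hz⟩ := exists_mem_tile hU x.ofLp y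
  refine mem_iUnion₂.2 ⟨z, fun i => ?_, hz⟩
  have hz := abs_sub_le_tileRadius_of_mem_tile hz i
  have hy : |y i| ≤ (R - 2 * tileRadius U) / 2 := hy i
  have := abs_sub_abs_le_abs_sub (x i + (U *ᵥ fun i => (z i : ℝ)) i) (y i)
  show |x i + (U *ᵥ fun i => (z i : ℝ)) i| ≤ R / 2
  simp only [Pi.add_apply] at hz
  rw [abs_sub_comm] at hz
  linarith

end Counting

theorem cube_mono {d : ℕ} {R R' : ℝ} (h : R ≤ R') : cube d R ⊆ cube d R' :=
  fun _ hx i => (hx i).trans (by linarith)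

theorem closedBall_subset_cube {d : ℕ} {p : EuclideanSpace ℝ (Fin d)} {R T : ℝ}
    (hp : p ∈ cube d (R - 2 * T)) : closedBall p T ⊆ cube d R := by
  intro y hy i
  have hyp : |y i - p i| ≤ T := (PiLp.dist_apply_le y p i).trans hy
  have hp : |p i| ≤ (R - 2 * T) / 2 := hp i
  have := abs_sub_abs_le_abs_sub (y i) (p i)
  show |y i| ≤ R / 2
  linarith

section Energy

variable {d : ℕ} {U : Matrix (Fin d) (Fin d) ℝ} {ω : Finset (EuclideanSpace ℝ (Fin d))}

local notation "𝔼" => EuclideanSpace ℝ (Fin d)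

theorem tsum_perConfig_inter_eq (hU : IsUnit U.det) (hω : ∀ x ∈ ω, x ∈ fundDomain d U)
    (Q : Set 𝔼) {h : 𝔼 → ℝ≥0∞} (hh : ∀ x z, h (x + latticePoint U z) = h x) :
    ∑' p : ↥(perConfig d U ω ∩ Q), h p = ∑ x ∈ ω, (latticeIndices U x Q).encard * h x := by
  have hsplit : ∑' p : ↥(perConfig d U ω ∩ Q), h p =
      ∑' p : ↥(perConfig d U ω), Q.indicator h p := by
    rw [tsum_subtype, tsum_subtype (perConfig d U ω), indicator_indicator]
  rw [hsplit, perConfig_eq_range, tsum_range _ (injective_add_latticePoint hU hω),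
    ENNReal.tsum_prod (f := fun (x : ω) z => Q.indicator h (↑x + latticePoint U z)),
    ← Finset.tsum_subtype]
  refine tsum_congr fun x => ?_
  rw [← ENNReal.tsum_set_const, tsum_subtype _ fun _ => h x]
  refine tsum_congr fun z => ?_
  simp only [indicator_apply, latticeIndices, mem_ofPred_eq, hh]

theorem interE_eq_tsum_potential (s : ℝ) (A B : Set 𝔼) :
    interE d s A B = ∑' p : A, potential s B p :=
  rfl

theorem perEnergy_eq_sum_potential (s : ℝ) :
    perEnergy d s U ω = ∑ x ∈ ω, potential s (perConfig d U ω) x :=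
  Finset.sum_congr rfl fun _ _ => tsum_congr fun _ => if_congr eq_comm rfl rfl

theorem iSup_sum_potential_inter_closedBall (s : ℝ) :
    ⨆ T : ℕ, ∑ x ∈ ω, potential s (perConfig d U ω ∩ closedBall x T) x = perEnergy d s U ω := by
  rw [perEnergy_eq_sum_potential, ← ENNReal.finsetSum_iSup_of_monotone
    (f := fun x (T : ℕ) => potential s (perConfig d U ω ∩ closedBall x T) x)]
  · exact Finset.sum_congr rfl fun x _ => iSup_potential_inter_closedBall s _ x
  · exact fun x m n h => potential_mono s
      (inter_subset_inter_right _ (closedBall_subset_closedBall (Nat.cast_le.2 h))) x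

theorem interE_perConfig_inter_le (hU : IsUnit U.det) (hω : ∀ x ∈ ω, x ∈ fundDomain d U)
    (s : ℝ) (Q : Set 𝔼) :
    interE d s (perConfig d U ω ∩ Q) (perConfig d U ω ∩ Q) ≤
      ∑ x ∈ ω, (latticeIndices U x Q).encard * potential s (perConfig d U ω) x := by
  rw [interE_eq_tsum_potential, ← tsum_perConfig_inter_eq hU hω Q
    (potential_perConfig_add_latticePoint s)]
  exact ENNReal.tsum_le_tsum fun p => potential_mono s inter_subset_left (p : 𝔼)

theorem sum_potential_inter_closedBall_le_interE (hU : IsUnit U.det)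
    (hω : ∀ x ∈ ω, x ∈ fundDomain d U) (s : ℝ) {R T : ℝ} (hT : 0 ≤ T) :
    ∑ x ∈ ω, (latticeIndices U x (cube d (R - 2 * T))).encard *
        potential s (perConfig d U ω ∩ closedBall x T) x ≤
      interE d s (perConfig d U ω ∩ cube d R) (perConfig d U ω ∩ cube d R) := by
  rw [interE_eq_tsum_potential,
    ← tsum_perConfig_inter_eq hU hω _ (potential_perConfig_inter_closedBall_add_latticePoint s T)]
  calc _ ≤ ∑' p : ↥(perConfig d U ω ∩ cube d (R - 2 * T)),
          potential s (perConfig d U ω ∩ cube d R) p :=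
        ENNReal.tsum_le_tsum fun p => potential_mono s
          (inter_subset_inter_right _ (closedBall_subset_cube p.2.2)) (p : 𝔼)
    _ ≤ _ := ENNReal.tsum_mono_subtype _
        (inter_subset_inter_right _ (cube_mono (by linarith : R - 2 * T ≤ R)))

theorem interE_perConfig_cube_le (hU : IsUnit U.det) (hω : ∀ x ∈ ω, x ∈ fundDomain d U)
    (s : ℝ) {R : ℝ} (hR : 0 ≤ R) :
    interE d s (perConfig d U ω ∩ cube d R) (perConfig d U ω ∩ cube d R) ≤
      ENNReal.ofReal ((R + 2 * tileRadius U) ^ d) *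
        (ENNReal.ofReal |U.det|⁻¹ * perEnergy d s U ω) := by
  rw [perEnergy_eq_sum_potential, Finset.mul_sum, Finset.mul_sum]
  refine (interE_perConfig_inter_le hU hω s _).trans (Finset.sum_le_sum fun x _ => ?_)
  rw [← mul_assoc]
  gcongr
  exact encard_latticeIndices_cube_le hU x hR

theorem le_interE_perConfig_cube (hU : IsUnit U.det) (hω : ∀ x ∈ ω, x ∈ fundDomain d U)
    (s : ℝ) {R T : ℝ} (hT : 0 ≤ T) (hR : 2 * T + 2 * tileRadius U ≤ R) :
    ENNReal.ofReal ((R - (2 * T + 2 * tileRadius U)) ^ d) *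
        (ENNReal.ofReal |U.det|⁻¹ *
          ∑ x ∈ ω, potential s (perConfig d U ω ∩ closedBall x T) x) ≤
      interE d s (perConfig d U ω ∩ cube d R) (perConfig d U ω ∩ cube d R) := by
  rw [Finset.mul_sum, Finset.mul_sum, ← sub_sub]
  refine (Finset.sum_le_sum fun x _ => ?_).trans
    (sum_potential_inter_closedBall_le_interE hU hω s hT)
  rw [← mul_assoc]
  gcongr
  exact le_encard_latticeIndices_cube hU x (by linarith)

end Energy

end PeriodicRiesz

end

open PeriodicRiesz in
theorem Ws_periodic_general (d : ℕ) (s : ℝ)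
    (U : Matrix (Fin d) (Fin d) ℝ) (hU : IsUnit U.det)
    (ω : Finset (EuclideanSpace ℝ (Fin d))) (hω : ∀ x ∈ ω, x ∈ fundDomain d U) :
    Ws d s (perConfig d U ω) = ENNReal.ofReal |U.det|⁻¹ * perEnergy d s U ω := by
  refine le_antisymm (liminf_rpow_neg_mul_le (c := 2 * tileRadius U) ?_) ?_
  · filter_upwards [eventually_ge_atTop 0] with R hR
    exact interE_perConfig_cube_le hU hω s hR
  · rw [← iSup_sum_potential_inter_closedBall, ENNReal.mul_iSup]
    refine iSup_le fun T => le_liminf_rpow_neg_mul (c := 2 * T + 2 * tileRadius U) ?_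
    filter_upwards [eventually_ge_atTop (2 * T + 2 * tileRadius U)] with R hR
    exact le_interE_perConfig_cube hU hω s T.cast_nonneg hR

/-- `W_s(ω + Λ) = E_{s,Λ}(ω) / |Λ|`. -/
theorem Ws_periodic (d : ℕ) (hd : 0 < d) (s : ℝ) (hs : (d : ℝ) < s)
    (U : Matrix (Fin d) (Fin d) ℝ) (hU : IsUnit U.det)
    (ω : Finset (EuclideanSpace ℝ (Fin d))) (hω : ∀ x ∈ ω, x ∈ fundDomain d U) :
    Ws d s (perConfig d U ω) = ENNReal.ofReal |U.det|⁻¹ * perEnergy d s U ω :=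
  Ws_periodic_general d s U hU ω hω
end

section
/- For a stationary law P of random point configurations in ℝ^d, the sequence n ↦ n^{-d} E_P[Int[K_n, K_n]] is non-decreasing over positive integers n; in particular the limit defining W_s(P) exists in [0, +∞]. -/
open scoped Classical

open MeasureTheory Filter Topology ENNReal Set

/-!
By stationarity, every translate of the cube `K_ρ` carries the same expected energy
`g(ρ) = E[Int[K_ρ, K_ρ]]`. Summing the energies of the cubes of side `ρ` centred on a finite
`ε`-grid counts a pair of points whose coordinates differ by `δ_i` about `∏ (ρ - δ_i) / ε` times,
and `R (r - δ) ≤ r (R - δ)` for `0 ≤ δ ≤ r ≤ R`. Rounding these counts costs the sides `r - ε` and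
`R + ε`; comparing the two grid sums pair by pair and letting the grid exhaust space gives
`R^d g(r - ε) ≤ r^d g(R + ε)`, and `ε → 0` shows that `ρ^{-d} g(ρ)` is non-decreasing on `(0, ∞)`.
-/

noncomputable section RieszEnergy

variable {d : ℕ}

instance : DiscreteMeasurableSpace (Set (EuclideanSpace ℝ (Fin d))) := ⟨fun _ => trivial⟩

def rieszKernel (s : ℝ) (p q : EuclideanSpace ℝ (Fin d)) : ℝ≥0∞ :=
  if p = q then 0 else edist p q ^ (-s)

def meanCubeEnergy (d : ℕ) (s : ℝ) (P : Measure (Set (EuclideanSpace ℝ (Fin d)))) (ρ : ℝ) :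
    ℝ≥0∞ :=
  ∫⁻ C, interE d s (C ∩ cube d ρ) (C ∩ cube d ρ) ∂P

lemma interE_eq_tsum (s : ℝ) (A B : Set (EuclideanSpace ℝ (Fin d))) :
    interE d s A B = ∑' (p) (q), if p ∈ A ∧ q ∈ B then rieszKernel s p q else 0 := by
  change ∑' (p : A) (q : B), rieszKernel (d := d) s p q = _
  rw [tsum_subtype A fun p => ∑' q : B, rieszKernel (d := d) s p q]
  refine tsum_congr fun p => ?_
  by_cases hp : p ∈ A <;> simp [hp, tsum_subtype B, Set.indicator_apply]

lemma interE_image_add_right (s : ℝ) (A B : Set (EuclideanSpace ℝ (Fin d)))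
    (v : EuclideanSpace ℝ (Fin d)) :
    interE d s ((· + v) '' A) ((· + v) '' B) = interE d s A B := by
  simp only [interE_eq_tsum, Set.image_add_right]
  rw [← (Equiv.addRight v).tsum_eq]
  refine tsum_congr fun p => ?_
  rw [← (Equiv.addRight v).tsum_eq]
  simp [rieszKernel]

lemma lintegral_interE_inter_image_add_right {P : Measure (Set (EuclideanSpace ℝ (Fin d)))}
    (hP : stationary d P) (s : ℝ) (A : Set (EuclideanSpace ℝ (Fin d)))
    (v : EuclideanSpace ℝ (Fin d)) :
    ∫⁻ C, interE d s (C ∩ (· + v) '' A) (C ∩ (· + v) '' A) ∂P =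
      ∫⁻ C, interE d s (C ∩ A) (C ∩ A) ∂P := by
  conv_lhs => rw [← hP v]
  rw [lintegral_map Measurable.of_discrete Measurable.of_discrete]
  refine lintegral_congr fun C => ?_
  rw [← Set.image_inter (add_left_injective v), interE_image_add_right]

lemma sum_interE_inter_eq_tsum {ι : Type*} (s : ℝ) (C : Set (EuclideanSpace ℝ (Fin d)))
    (A : ι → Set (EuclideanSpace ℝ (Fin d))) (K : Finset ι) :
    ∑ k ∈ K, interE d s (C ∩ A k) (C ∩ A k) =
      ∑' (p) (q), ((K.filter fun k => p ∈ A k ∧ q ∈ A k).card : ℝ≥0∞) *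
        if p ∈ C ∧ q ∈ C then rieszKernel s p q else 0 := by
  simp_rw [interE_eq_tsum]
  rw [← Summable.tsum_finsetSum fun _ _ => ENNReal.summable]
  refine tsum_congr fun p => ?_
  rw [← Summable.tsum_finsetSum fun _ _ => ENNReal.summable]
  refine tsum_congr fun q => ?_
  rw [Finset.natCast_card_filter, Finset.sum_mul]
  refine Finset.sum_congr rfl fun k _ => ?_
  simp only [Set.mem_inter_iff, ite_mul, one_mul, zero_mul]
  split_ifs <;> tauto

end RieszEnergy

lemma card_le_of_forall_mul_mem_Icc {ε a b : ℝ} (hε : 0 < ε) (hab : a ≤ b) {S : Finset ℤ}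
    (hS : ∀ z ∈ S, a ≤ ε * z ∧ ε * z ≤ b) : (S.card : ℝ) ≤ (b - a) / ε + 1 := by
  have hsub : S ⊆ Finset.Icc ⌈a / ε⌉ ⌊b / ε⌋ := fun z hz => by
    obtain ⟨ha, hb⟩ := hS z hz
    exact Finset.mem_Icc.2 ⟨Int.ceil_le.2 ((div_le_iff₀' hε).2 ha),
      Int.le_floor.2 ((le_div_iff₀' hε).2 hb)⟩
  have hdiv : a / ε ≤ b / ε := div_le_div_of_nonneg_right hab hε.le
  have hceil : ⌈a / ε⌉ ≤ ⌊b / ε⌋ + 1 := by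
    have : (⌈a / ε⌉ : ℝ) < ⌊b / ε⌋ + 2 := by
      linarith [Int.ceil_lt_add_one (a / ε), Int.lt_floor_add_one (b / ε)]
    have : ⌈a / ε⌉ < ⌊b / ε⌋ + 2 := by exact_mod_cast this
    omega
  have hcard : ((Finset.Icc ⌈a / ε⌉ ⌊b / ε⌋).card : ℝ) = ⌊b / ε⌋ + 1 - ⌈a / ε⌉ := by
    exact_mod_cast Int.card_Icc_of_le _ _ hceil
  calc (S.card : ℝ) ≤ (Finset.Icc ⌈a / ε⌉ ⌊b / ε⌋).card := by
        exact_mod_cast Finset.card_le_card hsub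
    _ ≤ (b - a) / ε + 1 := by
        rw [hcard, sub_div]
        linarith [Int.floor_le (b / ε), Int.le_ceil (a / ε)]

lemma le_card_of_forall_mul_mem_Icc {ε a b : ℝ} (hε : 0 < ε) {S : Finset ℤ}
    (hS : ∀ z : ℤ, a ≤ ε * z → ε * z ≤ b → z ∈ S) : (b - a) / ε - 1 ≤ S.card := by
  have hsub : Finset.Icc ⌈a / ε⌉ ⌊b / ε⌋ ⊆ S := fun z hz => by
    obtain ⟨ha, hb⟩ := Finset.mem_Icc.1 hz
    exact hS z ((div_le_iff₀' hε).1 (Int.ceil_le.1 ha)) ((le_div_iff₀' hε).1 (Int.le_floor.1 hb))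
  have hcard : ((⌊b / ε⌋ + 1 - ⌈a / ε⌉ : ℤ) : ℝ) ≤ (Finset.Icc ⌈a / ε⌉ ⌊b / ε⌋).card := by
    rw [Int.card_Icc]
    exact_mod_cast Int.self_le_toNat _
  calc (b - a) / ε - 1 ≤ ((⌊b / ε⌋ + 1 - ⌈a / ε⌉ : ℤ) : ℝ) := by
        push_cast
        rw [sub_div]
        linarith [Int.sub_one_lt_floor (b / ε), Int.ceil_lt_add_one (a / ε)]
    _ ≤ S.card := hcard.trans (by exact_mod_cast Finset.card_le_card hsub)

lemma abs_sub_le_and_abs_sub_le_iff {x y t c : ℝ} (hxy : x ≤ y) :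
    |x - t| ≤ c ∧ |y - t| ≤ c ↔ y - c ≤ t ∧ t ≤ x + c := by
  simp only [abs_le]
  constructor
  · rintro ⟨⟨hx, -⟩, -, hy⟩
    constructor <;> linarith
  · rintro ⟨hy, hx⟩
    refine ⟨⟨?_, ?_⟩, ?_, ?_⟩ <;> linarith

lemma mul_card_filter_le_mul_card_filter {ε r R : ℝ} (hε : 0 < ε) (hr : 0 < r) (hrR : r ≤ R)
    {S S' : Finset ℤ} (hSS' : ∀ z ∈ S, ∀ z' : ℤ, |ε * z' - ε * z| ≤ (r + R) / 2 → z' ∈ S')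
    (x y : ℝ) :
    R * (S.filter fun z : ℤ => |x - ε * z| ≤ (r - ε) / 2 ∧ |y - ε * z| ≤ (r - ε) / 2).card ≤
      r * (S'.filter fun z : ℤ => |x - ε * z| ≤ (R + ε) / 2 ∧ |y - ε * z| ≤ (R + ε) / 2).card := by
  wlog hxy : x ≤ y generalizing x y
  · simpa only [and_comm] using this y x (le_of_not_ge hxy)
  simp only [abs_sub_le_and_abs_sub_le_iff hxy]
  rcases Finset.eq_empty_or_nonempty
    (S.filter fun z : ℤ => y - (r - ε) / 2 ≤ ε * z ∧ ε * z ≤ x + (r - ε) / 2) with hempty | hne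
  · rw [hempty, Finset.card_empty, Nat.cast_zero, mul_zero]
    positivity
  obtain ⟨z₀, hz₀S, hz₀y, hz₀x⟩ := hne.exists_mem.imp fun _ h => by
    simpa only [Finset.mem_filter] using h
  have hsmall := card_le_of_forall_mul_mem_Icc hε (by linarith)
    (S := S.filter fun z : ℤ => y - (r - ε) / 2 ≤ ε * z ∧ ε * z ≤ x + (r - ε) / 2)
    fun z hz => (Finset.mem_filter.1 hz).2
  have hbig := le_card_of_forall_mul_mem_Icc hε
    (S := S'.filter fun z : ℤ => y - (R + ε) / 2 ≤ ε * z ∧ ε * z ≤ x + (R + ε) / 2)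
    fun z hy hx => Finset.mem_filter.2 ⟨hSS' z₀ hz₀S z (abs_le.2 ⟨by linarith, by linarith⟩), hy, hx⟩
  have hδ : 0 ≤ y - x := sub_nonneg.2 hxy
  calc R * _ ≤ R * ((r - (y - x)) / ε) := by
        refine mul_le_mul_of_nonneg_left (hsmall.trans_eq ?_) (by linarith)
        rw [div_add_one hε.ne']
        ring
    _ ≤ r * ((R - (y - x)) / ε) := by
        rw [mul_div_assoc', mul_div_assoc']
        exact div_le_div_of_nonneg_right (by nlinarith) hε.le
    _ ≤ r * _ := by
        refine mul_le_mul_of_nonneg_left (le_of_eq_of_le ?_ hbig) hr.le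
        rw [div_sub_one hε.ne']
        ring

noncomputable section GridAveraging

variable {d : ℕ}

def gridCube (ε ρ : ℝ) (k : Fin d → ℤ) : Set (EuclideanSpace ℝ (Fin d)) :=
  (· + WithLp.toLp 2 fun i => ε * k i) '' cube d ρ

lemma mem_gridCube {ε ρ : ℝ} {k : Fin d → ℤ} {x : EuclideanSpace ℝ (Fin d)} :
    x ∈ gridCube ε ρ k ↔ ∀ i, |x i - ε * k i| ≤ ρ / 2 := by
  simp [gridCube, Set.image_add_right, cube, sub_eq_add_neg]

lemma card_filter_piFinset_gridCube (ε ρ : ℝ) (S : Finset ℤ) (p q : EuclideanSpace ℝ (Fin d)) :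
    ((Fintype.piFinset fun _ : Fin d => S).filter
        fun k => p ∈ gridCube ε ρ k ∧ q ∈ gridCube ε ρ k).card =
      ∏ i, (S.filter fun z : ℤ => |p i - ε * z| ≤ ρ / 2 ∧ |q i - ε * z| ≤ ρ / 2).card := by
  rw [← Fintype.card_piFinset]
  congr 1
  ext k
  simp only [Finset.mem_filter, Fintype.mem_piFinset, mem_gridCube]
  exact ⟨fun ⟨hS, hp, hq⟩ i => ⟨hS i, hp i, hq i⟩,
    fun h => ⟨fun i => (h i).1, fun i => (h i).2.1, fun i => (h i).2.2⟩⟩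

lemma ofReal_pow_mul_sum_interE_gridCube_le (s : ℝ) {ε r R : ℝ} (hε : 0 < ε) (hr : 0 < r)
    (hrR : r ≤ R) {S S' : Finset ℤ}
    (hSS' : ∀ z ∈ S, ∀ z' : ℤ, |ε * z' - ε * z| ≤ (r + R) / 2 → z' ∈ S')
    (C : Set (EuclideanSpace ℝ (Fin d))) :
    ENNReal.ofReal (R ^ d) * ∑ k ∈ Fintype.piFinset fun _ : Fin d => S,
        interE d s (C ∩ gridCube ε (r - ε) k) (C ∩ gridCube ε (r - ε) k) ≤
      ENNReal.ofReal (r ^ d) * ∑ k ∈ Fintype.piFinset fun _ : Fin d => S',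
        interE d s (C ∩ gridCube ε (R + ε) k) (C ∩ gridCube ε (R + ε) k) := by
  have hR : 0 < R := hr.trans_le hrR
  simp only [sum_interE_inter_eq_tsum, ← ENNReal.tsum_mul_left]
  refine ENNReal.tsum_le_tsum fun p => ENNReal.tsum_le_tsum fun q => ?_
  rw [← mul_assoc, ← mul_assoc]
  gcongr ?_ * _
  rw [card_filter_piFinset_gridCube, card_filter_piFinset_gridCube, ← ENNReal.ofReal_natCast,
    ← ENNReal.ofReal_natCast, ← ENNReal.ofReal_mul (by positivity),
    ← ENNReal.ofReal_mul (by positivity)]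
  refine ENNReal.ofReal_le_ofReal ?_
  push_cast
  rw [← Fin.prod_const, ← Fin.prod_const, ← Finset.prod_mul_distrib, ← Finset.prod_mul_distrib]
  exact Finset.prod_le_prod (fun _ _ => by positivity)
    fun i _ => mul_card_filter_le_mul_card_filter hε hr hrR hSS' (p i) (q i)

variable {P : Measure (Set (EuclideanSpace ℝ (Fin d)))}

lemma lintegral_sum_interE_gridCube (hP : stationary d P) (s ε ρ : ℝ) (S : Finset ℤ) :
    ∫⁻ C, ∑ k ∈ Fintype.piFinset (fun _ : Fin d => S),
        interE d s (C ∩ gridCube ε ρ k) (C ∩ gridCube ε ρ k) ∂P =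
      (S.card : ℝ≥0∞) ^ d * meanCubeEnergy d s P ρ := by
  rw [lintegral_finsetSum _ fun _ _ => Measurable.of_discrete]
  simp only [gridCube, lintegral_interE_inter_image_add_right hP, Finset.sum_const,
    Fintype.card_piFinset_const, nsmul_eq_mul, Nat.cast_pow]
  rfl

lemma card_pow_mul_meanCubeEnergy_le (hP : stationary d P) (s : ℝ) {ε r R : ℝ} (hε : 0 < ε)
    (hr : 0 < r) (hrR : r ≤ R) {S S' : Finset ℤ}
    (hSS' : ∀ z ∈ S, ∀ z' : ℤ, |ε * z' - ε * z| ≤ (r + R) / 2 → z' ∈ S') :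
    (S.card : ℝ≥0∞) ^ d * (ENNReal.ofReal (R ^ d) * meanCubeEnergy d s P (r - ε)) ≤
      (S'.card : ℝ≥0∞) ^ d * (ENNReal.ofReal (r ^ d) * meanCubeEnergy d s P (R + ε)) := by
  rw [mul_left_comm ((S.card : ℝ≥0∞) ^ d), mul_left_comm ((S'.card : ℝ≥0∞) ^ d),
    ← lintegral_sum_interE_gridCube hP, ← lintegral_sum_interE_gridCube hP,
    ← lintegral_const_mul _ Measurable.of_discrete, ← lintegral_const_mul _ Measurable.of_discrete]
  exact lintegral_mono fun C => ofReal_pow_mul_sum_interE_gridCube_le s hε hr hrR hSS' C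

end GridAveraging

lemma ENNReal.le_of_forall_natCast_pow_mul_le {X Y : ℝ≥0∞} {c d : ℕ}
    (h : ∀ N : ℕ, (N : ℝ≥0∞) ^ d * X ≤ (N + c : ℝ≥0∞) ^ d * Y) : X ≤ Y := by
  have hlim : Tendsto (fun N : ℕ => (1 + c * (N : ℝ≥0∞)⁻¹) ^ d * Y) atTop (𝓝 Y) := by
    have h1 : Tendsto (fun N : ℕ => 1 + c * (N : ℝ≥0∞)⁻¹) atTop (𝓝 1) := by
      simpa using tendsto_const_nhds.add
        (ENNReal.Tendsto.const_mul ENNReal.tendsto_inv_nat_nhds_zero (Or.inr (by simp)))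
    simpa using ENNReal.Tendsto.mul_const (ENNReal.Tendsto.pow h1) (Or.inl (by simp))
  refine ge_of_tendsto hlim (eventually_atTop.2 ⟨1, fun N hN => ?_⟩)
  have hN : (N : ℝ≥0∞) ≠ 0 := by simpa using Nat.one_le_iff_ne_zero.1 hN
  calc X = ((N : ℝ≥0∞)⁻¹ * N) ^ d * X := by
        rw [ENNReal.inv_mul_cancel hN (ENNReal.natCast_ne_top N), one_pow, one_mul]
    _ ≤ (N : ℝ≥0∞)⁻¹ ^ d * ((N + c) ^ d * Y) := by
        rw [mul_pow, mul_assoc]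
        exact mul_le_mul_right (h N) _
    _ = (1 + c * (N : ℝ≥0∞)⁻¹) ^ d * Y := by
        rw [← mul_assoc, ← mul_pow, mul_add, ENNReal.inv_mul_cancel hN (ENNReal.natCast_ne_top N),
          mul_comm _ (c : ℝ≥0∞)]

lemma exists_tendsto_atTop_of_monotoneOn_Ici {α : Type*} [CompleteLinearOrder α]
    [TopologicalSpace α] [OrderTopology α] {f : ℝ → α} {a : ℝ} (hf : MonotoneOn f (Set.Ici a)) :
    ∃ L, Tendsto f atTop (𝓝 L) := by
  refine ⟨_, (tendsto_atTop_iSup fun x y hxy => hf (le_max_right x a) (le_max_right y a)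
    (max_le_max_right a hxy)).congr' ?_⟩
  filter_upwards [eventually_ge_atTop a] with x hx
  rw [max_eq_left hx]

section Monotonicity

variable {d : ℕ} {P : Measure (Set (EuclideanSpace ℝ (Fin d)))}

lemma ofReal_pow_mul_meanCubeEnergy_sub_le (hP : stationary d P) (s : ℝ) {ε r R : ℝ}
    (hε : 0 < ε) (hr : 0 < r) (hrR : r ≤ R) :
    ENNReal.ofReal (R ^ d) * meanCubeEnergy d s P (r - ε) ≤
      ENNReal.ofReal (r ^ d) * meanCubeEnergy d s P (R + ε) := by
  obtain ⟨c, hc⟩ := exists_nat_ge ((r + R) / 2 / ε)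
  rw [div_le_iff₀' hε] at hc
  refine ENNReal.le_of_forall_natCast_pow_mul_le (c := 2 * c) (d := d) fun N => ?_
  have hS : (Finset.Ico (0 : ℤ) N).card = N := by simp
  have hS' : (Finset.Ico (-(c : ℤ)) (N + c)).card = N + 2 * c := by
    rw [Int.card_Ico]
    omega
  have hgrid := card_pow_mul_meanCubeEnergy_le hP s hε hr hrR
    (S := Finset.Ico 0 N) (S' := Finset.Ico (-c) (N + c)) fun z hz z' hz' => by
      have hdist : |(z' : ℝ) - z| ≤ c := by
        rw [← mul_le_mul_iff_of_pos_left hε, ← abs_of_pos hε, ← abs_mul, abs_of_pos hε, mul_sub]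
        linarith
      rw [abs_le] at hdist
      have : -(c : ℤ) ≤ z' - z ∧ z' - z ≤ c := by exact_mod_cast hdist
      simp only [Finset.mem_Ico] at hz ⊢
      omega
  rw [hS, hS'] at hgrid
  exact_mod_cast hgrid

lemma ofReal_pow_mul_meanCubeEnergy_le (hP : stationary d P) (s : ℝ) {x y : ℝ} (hx : 0 < x)
    (hxy : x < y) :
    ENNReal.ofReal (y ^ d) * meanCubeEnergy d s P x ≤
      ENNReal.ofReal (x ^ d) * meanCubeEnergy d s P y := by
  have hlim : ∀ (a : ℝ) (σ : ℝ) (g : ℝ≥0∞), 0 < a →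
      Tendsto (fun ε => ENNReal.ofReal ((a + σ * ε) ^ d) * g) (𝓝[>] 0)
        (𝓝 (ENNReal.ofReal (a ^ d) * g)) := fun a σ g ha => by
    refine ENNReal.Tendsto.mul_const ?_ (Or.inl (by simp [ha]))
    have : Continuous fun ε : ℝ => ENNReal.ofReal ((a + σ * ε) ^ d) :=
      ENNReal.continuous_ofReal.comp (by fun_prop)
    simpa using this.tendsto 0 |>.mono_left nhdsWithin_le_nhds
  refine le_of_tendsto_of_tendsto (hlim y (-1) _ (hx.trans hxy)) (hlim x 1 _ hx) ?_
  filter_upwards [Ioo_mem_nhdsGT (half_pos (sub_pos.2 hxy))] with ε ⟨hε, hεxy⟩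
  simpa [sub_eq_add_neg] using ofReal_pow_mul_meanCubeEnergy_sub_le hP s hε (r := x + ε) (R := y - ε)
    (by linarith) (by linarith)

lemma monotoneOn_ofReal_rpow_neg_mul_meanCubeEnergy (hP : stationary d P) (s : ℝ) :
    MonotoneOn (fun ρ : ℝ => ENNReal.ofReal (ρ ^ (-(d : ℝ))) * meanCubeEnergy d s P ρ)
      (Set.Ioi 0) := by
  intro x hx y hy hxy
  rcases hxy.eq_or_lt with rfl | hlt
  · rfl
  have hpow : ∀ ρ : ℝ, 0 < ρ → ENNReal.ofReal (ρ ^ (-(d : ℝ))) = (ENNReal.ofReal (ρ ^ d))⁻¹ :=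
    fun ρ hρ => by
      rw [Real.rpow_neg hρ.le, Real.rpow_natCast, ENNReal.ofReal_inv_of_pos (pow_pos hρ d)]
  have hne : ∀ ρ : ℝ, 0 < ρ → ENNReal.ofReal (ρ ^ d) ≠ 0 := fun ρ hρ => by
    simpa using pow_pos hρ d
  simp only [hpow x hx, hpow y hy]
  calc (ENNReal.ofReal (x ^ d))⁻¹ * meanCubeEnergy d s P x
      = (ENNReal.ofReal (x ^ d))⁻¹ * (ENNReal.ofReal (y ^ d))⁻¹ *
          (ENNReal.ofReal (y ^ d) * meanCubeEnergy d s P x) := by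
        rw [mul_assoc, ← mul_assoc (ENNReal.ofReal (y ^ d))⁻¹,
          ENNReal.inv_mul_cancel (hne y hy) ENNReal.ofReal_ne_top, one_mul]
    _ ≤ (ENNReal.ofReal (x ^ d))⁻¹ * (ENNReal.ofReal (y ^ d))⁻¹ *
          (ENNReal.ofReal (x ^ d) * meanCubeEnergy d s P y) := by
        exact mul_le_mul_right (ofReal_pow_mul_meanCubeEnergy_le hP s hx hlt) _
    _ = (ENNReal.ofReal (y ^ d))⁻¹ * meanCubeEnergy d s P y := by
        rw [mul_comm (ENNReal.ofReal (x ^ d))⁻¹, mul_assoc, ← mul_assoc (ENNReal.ofReal (x ^ d))⁻¹,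
          ENNReal.inv_mul_cancel (hne x hx) ENNReal.ofReal_ne_top, one_mul]

end Monotonicity

theorem WsProc_monotone_and_limit_exists_general (d : ℕ) (s : ℝ)
    (P : Measure (Set (EuclideanSpace ℝ (Fin d))))
    (hstat : stationary d P) :
    (∀ m n : ℕ, 1 ≤ m → m ≤ n →
      ENNReal.ofReal ((m : ℝ) ^ (-(d : ℝ))) *
          ∫⁻ C, interE d s (C ∩ cube d m) (C ∩ cube d m) ∂P ≤
        ENNReal.ofReal ((n : ℝ) ^ (-(d : ℝ))) *
          ∫⁻ C, interE d s (C ∩ cube d n) (C ∩ cube d n) ∂P) ∧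
    ∃ L : ℝ≥0∞, Filter.Tendsto
      (fun R : ℝ => ENNReal.ofReal (R ^ (-(d : ℝ))) *
        ∫⁻ C, interE d s (C ∩ cube d R) (C ∩ cube d R) ∂P)
      Filter.atTop (nhds L) := by
  have hmono := monotoneOn_ofReal_rpow_neg_mul_meanCubeEnergy hstat s
  refine ⟨fun m n hm hmn => ?_,
    exists_tendsto_atTop_of_monotoneOn_Ici (hmono.mono (Set.Ici_subset_Ioi.2 one_pos))⟩
  have hm' : (0 : ℝ) < m := by exact_mod_cast hm
  exact hmono hm' (hm'.trans_le (by exact_mod_cast hmn)) (by exact_mod_cast hmn)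

/-- for stationary `P`, `n ↦ n^{-d} E_P[Int[K_n,K_n]]` is non-decreasing over
positive integers, and the limit defining `W_s(P)` exists in `[0,∞]`. -/
theorem WsProc_monotone_and_limit_exists (d : ℕ) (hd : 0 < d) (s : ℝ) (hs : (d : ℝ) < s)
    (P : Measure (Set (EuclideanSpace ℝ (Fin d)))) [IsProbabilityMeasure P]
    (hstat : stationary d P) :
    (∀ m n : ℕ, 1 ≤ m → m ≤ n →
      ENNReal.ofReal ((m : ℝ) ^ (-(d : ℝ))) *
          ∫⁻ C, interE d s (C ∩ cube d m) (C ∩ cube d m) ∂P ≤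
        ENNReal.ofReal ((n : ℝ) ^ (-(d : ℝ))) *
          ∫⁻ C, interE d s (C ∩ cube d n) (C ∩ cube d n) ∂P) ∧
    ∃ L : ℝ≥0∞, Filter.Tendsto
      (fun R : ℝ => ENNReal.ofReal (R ^ (-(d : ℝ))) *
        ∫⁻ C, interE d s (C ∩ cube d R) (C ∩ cube d R) ∂P)
      Filter.atTop (nhds L) :=
  WsProc_monotone_and_limit_exists_general d s P hstat
end

section
/- The minimal Riesz s-energy of n points contained in a cube of sidelength L is bounded below by c · n^{1+s/d} / L^s for some constant c > 0 depending only on s and d. -/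
open scoped Classical

open MeasureTheory Filter Topology ENNReal Set

open Finset

/-! Cut the cube into `m ^ d` subcubes of side `L / m`, where `m = ⌊(n / 2) ^ (1 / d)⌋`, so that
`2 m ^ d ≤ n`. At most `m ^ d` points are alone in their subcube, so at least `n / 2` points have a
neighbour within the subcube diameter `√d L / m`, and each of them contributes at least
`(√d L / m) ^ (-s) ≳ n ^ (s / d) / L ^ s` to the energy. -/

theorem card_sub_card_le_sum_card_fiberMates {ι κ : Type*} [Fintype ι] [Fintype κ] [DecidableEq ι]
    (b : ι → κ) :
    Fintype.card ι - Fintype.card κ ≤ ∑ i, #{j | j ≠ i ∧ b j = b i} := by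
  have hlonely : #{i | ¬ ∃ j, j ≠ i ∧ b j = b i} ≤ Fintype.card κ := by
    refine card_le_card_of_injOn b (fun _ _ => Finset.mem_univ _) fun i hi i' _ hii' => ?_
    by_contra hne
    simp only [coe_filter, Finset.mem_univ, true_and, Set.mem_ofPred_eq] at hi
    exact hi ⟨i', Ne.symm hne, hii'.symm⟩
  have hpaired : #{i | ∃ j, j ≠ i ∧ b j = b i} ≤ ∑ i, #{j | j ≠ i ∧ b j = b i} := calc
    #{i | ∃ j, j ≠ i ∧ b j = b i} = ∑ i with ∃ j, j ≠ i ∧ b j = b i, 1 := card_eq_sum_ones _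
    _ ≤ ∑ i with ∃ j, j ≠ i ∧ b j = b i, #{j | j ≠ i ∧ b j = b i} :=
      sum_le_sum fun i hi => by simpa [card_pos, filter_nonempty_iff] using hi
    _ ≤ ∑ i, #{j | j ≠ i ∧ b j = b i} :=
      sum_le_sum_of_subset_of_nonneg (filter_subset _ _) fun _ _ _ => Nat.zero_le _
  have hsplit := card_filter_add_card_filter_not (s := univ) fun i => ∃ j, j ≠ i ∧ b j = b i
  rw [card_univ] at hsplit
  omega

theorem card_sub_card_mul_le_Esfin {d n : ℕ} {s D : ℝ} {κ : Type*} [Fintype κ] (hs : 0 ≤ s)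
    (ω : Fin n → EuclideanSpace ℝ (Fin d)) (b : Fin n → κ)
    (hD : ∀ i j, b i = b j → dist (ω i) (ω j) ≤ D) :
    ((n - Fintype.card κ : ℕ) : ℝ≥0∞) * ENNReal.ofReal D ^ (-s) ≤ Esfin d s ω := by
  have hmate : ∀ i j, (if j ≠ i ∧ b j = b i then ENNReal.ofReal D ^ (-s) else 0) ≤
      if i = j then 0 else edist (ω i) (ω j) ^ (-s) := by
    intro i j
    split_ifs with hij hi
    · exact absurd hi.symm hij.1
    · rw [edist_dist, ENNReal.rpow_neg, ENNReal.rpow_neg]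
      gcongr
      exact hD i j hij.2.symm
    all_goals exact zero_le
  calc ((n - Fintype.card κ : ℕ) : ℝ≥0∞) * ENNReal.ofReal D ^ (-s)
      ≤ (∑ i, #{j | j ≠ i ∧ b j = b i} : ℕ) * ENNReal.ofReal D ^ (-s) := by
        gcongr
        simpa using card_sub_card_le_sum_card_fiberMates b
    _ = ∑ i, ∑ j, if j ≠ i ∧ b j = b i then ENNReal.ofReal D ^ (-s) else 0 := by
        simp only [Nat.cast_sum, sum_mul, ← sum_filter, sum_const, nsmul_eq_mul]
    _ ≤ Esfin d s ω := sum_le_sum fun i _ => sum_le_sum fun j _ => hmate i j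

theorem EuclideanSpace.dist_le_sqrt_card_mul {ι : Type*} [Fintype ι] {x y : EuclideanSpace ℝ ι}
    {a : ℝ} (ha : 0 ≤ a) (h : ∀ i, |x i - y i| ≤ a) : dist x y ≤ √(Fintype.card ι) * a := calc
  dist x y = √(∑ i, dist (x i) (y i) ^ 2) := EuclideanSpace.dist_eq x y
  _ ≤ √(∑ _i : ι, a ^ 2) := by
    gcongr with i
    exact (Real.dist_eq _ _).trans_le (h i)
  _ = √(Fintype.card ι) * a := by
    rw [sum_const, card_univ, nsmul_eq_mul, Real.sqrt_mul (Nat.cast_nonneg _), Real.sqrt_sq ha]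

/-- Index `k < m` of an interval `[k, k + 1]` containing `u ∈ [0, m]`; the endpoint `m` goes into
the last one. -/
noncomputable def binIndex (m : ℕ) (u : ℝ) : ℕ := min ⌊u⌋₊ (m - 1)

theorem binIndex_lt {m : ℕ} (hm : 0 < m) (u : ℝ) : binIndex m u < m := by
  unfold binIndex; omega

theorem binIndex_le_self {m : ℕ} {u : ℝ} (hu : 0 ≤ u) : (binIndex m u : ℝ) ≤ u :=
  le_trans (Nat.cast_le.2 (min_le_left _ _)) (Nat.floor_le hu)

theorem self_le_binIndex_add_one {m : ℕ} (hm : 0 < m) {u : ℝ} (hu : u ≤ m) :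
    u ≤ binIndex m u + 1 := by
  rcases le_total ⌊u⌋₊ (m - 1) with h | h
  · rw [binIndex, min_eq_left h]
    exact (Nat.lt_floor_add_one u).le
  · rw [binIndex, min_eq_right h, Nat.cast_sub hm, Nat.cast_one, sub_add_cancel]
    exact hu

theorem abs_sub_le_one_of_binIndex_eq {m : ℕ} (hm : 0 < m) {u v : ℝ} (hu₀ : 0 ≤ u) (hu : u ≤ m)
    (hv₀ : 0 ≤ v) (hv : v ≤ m) (h : binIndex m u = binIndex m v) : |u - v| ≤ 1 := by
  have hu_lo := binIndex_le_self (m := m) hu₀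
  have hu_hi := self_le_binIndex_add_one hm hu
  have hv_lo := binIndex_le_self (m := m) hv₀
  have hv_hi := self_le_binIndex_add_one hm hv
  rw [h] at hu_lo hu_hi
  exact abs_sub_le_iff.2 ⟨by linarith, by linarith⟩

noncomputable def cubeCell {ι : Type*} {m : ℕ} (hm : 0 < m) (L : ℝ) (x₀ x : EuclideanSpace ℝ ι) :
    ι → Fin m :=
  fun i => ⟨binIndex m ((x i - x₀ i + L / 2) * m / L), binIndex_lt hm _⟩

theorem dist_le_of_cubeCell_eq {ι : Type*} [Fintype ι] {m : ℕ} (hm : 0 < m) {L : ℝ} (hL : 0 < L)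
    {x₀ x y : EuclideanSpace ℝ ι} (hx : ∀ i, |x i - x₀ i| ≤ L / 2) (hy : ∀ i, |y i - x₀ i| ≤ L / 2)
    (h : cubeCell hm L x₀ x = cubeCell hm L x₀ y) :
    dist x y ≤ √(Fintype.card ι) * (L / m) := by
  have hm' : (0 : ℝ) < m := Nat.cast_pos.2 hm
  refine EuclideanSpace.dist_le_sqrt_card_mul (by positivity) fun i => ?_
  have hrange : ∀ t, |t| ≤ L / 2 → 0 ≤ (t + L / 2) * m / L ∧ (t + L / 2) * m / L ≤ m := by
    intro t ht
    rw [abs_le] at ht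
    exact ⟨div_nonneg (mul_nonneg (by linarith) hm'.le) hL.le, by rw [div_le_iff₀ hL]; nlinarith⟩
  obtain ⟨hx₀, hx₁⟩ := hrange _ (hx i)
  obtain ⟨hy₀, hy₁⟩ := hrange _ (hy i)
  have hbin := abs_sub_le_one_of_binIndex_eq hm hx₀ hx₁ hy₀ hy₁ (congrArg Fin.val (congrFun h i))
  rwa [← sub_div, ← sub_mul, add_sub_add_right_eq_sub, sub_sub_sub_cancel_right, abs_div,
    abs_mul, abs_of_pos hL, abs_of_pos hm', div_le_one hL, ← le_div_iff₀ hm'] at hbin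

theorem exists_gridSize {d n : ℕ} (hd : 0 < d) (hn : 2 ≤ n) :
    ∃ m : ℕ, 0 < m ∧ 2 * m ^ d ≤ n ∧ ((n : ℝ) / 2) ^ (1 / (d : ℝ)) ≤ 2 * m := by
  set y := ((n : ℝ) / 2) ^ (1 / (d : ℝ))
  have hn' : (1 : ℝ) ≤ n / 2 := by
    rw [le_div_iff₀ two_pos, one_mul]; exact_mod_cast hn
  have hy : 1 ≤ y := Real.one_le_rpow hn' (by positivity)
  have hm : 0 < ⌊y⌋₊ := Nat.floor_pos.2 hy
  refine ⟨⌊y⌋₊, hm, ?_, ?_⟩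
  · have hyd : y ^ d = n / 2 := by
      rw [← Real.rpow_natCast, ← Real.rpow_mul (by positivity), one_div_mul_cancel (by positivity),
        Real.rpow_one]
    have hmy : (⌊y⌋₊ : ℝ) ^ d ≤ n / 2 :=
      hyd ▸ pow_le_pow_left₀ (Nat.cast_nonneg _) (Nat.floor_le (by positivity)) d
    rw [le_div_iff₀ two_pos] at hmy
    exact_mod_cast (by linarith : (2 * ⌊y⌋₊ ^ d : ℝ) ≤ n)
  · have hy_lt := Nat.sub_one_lt_floor y
    have hm_one : (1 : ℝ) ≤ ⌊y⌋₊ := Nat.one_le_cast.2 hm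
    linarith

theorem rpow_bound_le_of_gridSize {d n m : ℕ} {s L : ℝ} (hd : 0 < d) (hs : 0 ≤ s) (hL : 0 < L)
    (hm : 0 < m) (hmn : 2 * m ^ d ≤ n) (hy : ((n : ℝ) / 2) ^ (1 / (d : ℝ)) ≤ 2 * m) :
    (2 * √d) ^ (-s) / 2 ^ (1 + s / d) * n ^ (1 + s / d) / L ^ s ≤
      ((n - m ^ d : ℕ) : ℝ) * (√d * (L / m)) ^ (-s) := by
  have hd' : (0 : ℝ) < d := Nat.cast_pos.2 hd
  have hm' : (0 : ℝ) < m := Nat.cast_pos.2 hm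
  have hmn' : 2 * (m : ℝ) ^ d ≤ n := by exact_mod_cast hmn
  have hn : (0 : ℝ) < n := lt_of_lt_of_le (by positivity) hmn'
  have hhalf : (n : ℝ) / 2 ≤ ((n - m ^ d : ℕ) : ℝ) := by
    rw [Nat.cast_sub (by omega), Nat.cast_pow]
    linarith
  calc (2 * √d) ^ (-s) / 2 ^ (1 + s / d) * n ^ (1 + s / d) / L ^ s
      = n / 2 * (((n : ℝ) / 2) ^ (1 / (d : ℝ))) ^ s / (2 * √d * L) ^ s := by
        rw [← Real.rpow_mul (by positivity), one_div_mul_eq_div, Real.div_rpow hn.le zero_le_two,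
          Real.rpow_add hn, Real.rpow_add two_pos, Real.rpow_one, Real.rpow_one,
          Real.rpow_neg (by positivity), Real.mul_rpow (by positivity) hL.le]
        field_simp
    _ ≤ n / 2 * (2 * m) ^ s / (2 * √d * L) ^ s := by gcongr
    _ = n / 2 * (√d * (L / m)) ^ (-s) := by
        rw [Real.rpow_neg (by positivity), ← Real.inv_rpow (by positivity), mul_div_assoc,
          ← Real.div_rpow (by positivity) (by positivity)]
        congr 2
        field_simp
    _ ≤ ((n - m ^ d : ℕ) : ℝ) * (√d * (L / m)) ^ (-s) := by gcongr

/-- the minimal Riesz `s`-energy of `n` points in a cube of sidelength `L`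
is at least `c n^{1+s/d} / L^s`. -/
theorem energy_lower_bound_cube (d : ℕ) (hd : 0 < d) (s : ℝ) (hs : (d : ℝ) < s) :
    ∃ c : ℝ, 0 < c ∧
      ∀ (n : ℕ), 2 ≤ n → ∀ (L : ℝ), 0 < L →
        ∀ (x₀ : EuclideanSpace ℝ (Fin d)) (ω : Fin n → EuclideanSpace ℝ (Fin d)),
          (∀ i, ∀ j, |ω i j - x₀ j| ≤ L / 2) →
          ENNReal.ofReal (c * (n : ℝ) ^ (1 + s / (d : ℝ)) / L ^ s) ≤ Esfin d s ω := by
  have hs₀ : 0 ≤ s := le_trans (Nat.cast_nonneg d) hs.le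
  refine ⟨(2 * √d) ^ (-s) / 2 ^ (1 + s / d), by positivity, ?_⟩
  intro n hn L hL x₀ ω hω
  obtain ⟨m, hm, hmn, hy⟩ := exists_gridSize hd hn
  have hcell : ∀ i j, cubeCell hm L x₀ (ω i) = cubeCell hm L x₀ (ω j) →
      dist (ω i) (ω j) ≤ √d * (L / m) := by
    simpa only [Fintype.card_fin] using fun i j => dist_le_of_cubeCell_eq hm hL (hω i) (hω j)
  refine le_trans ?_ (card_sub_card_mul_le_Esfin hs₀ ω _ hcell)
  rw [Fintype.card_fun, Fintype.card_fin, Fintype.card_fin,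
    ENNReal.ofReal_rpow_of_pos (by positivity), ← ENNReal.ofReal_natCast,
    ← ENNReal.ofReal_mul (Nat.cast_nonneg _)]
  exact ENNReal.ofReal_le_ofReal (rpow_bound_le_of_gridSize hd hs₀ hL hm hmn hy)
end
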